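/- arXiv:1409.1685 — 2 statements merged into one kernel-verified Lean document; each statement's English description precedes it below -/
import Mathlib

section
/- Let 𝒜 be a partial Hopf algebra with a left invariant integral φ. Then S((id ⊗ φ)(Δ(b)(1 ⊗ a))) = (id ⊗ φ)((1 ⊗ b)Δ(a)) for all a,b ∈ A. Similarly, if φ is a right invariant integral on the partial Hopf algebra 𝒜, then S((φ ⊗ id)((a ⊗ 1)Δ(b))) = (φ ⊗ id)(Δ(a)(b ⊗ 1)) for all a,b ∈ A. -/
open scoped TensorProduct Classical ComplexOrder
open TensorProduct

noncomputable section

/-- The homogeneous component `A(k,l;m,n)` of a partial algebra, determined by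
the family of local units `E`: it consists of those `a` with `E k m * a = a = a * E l n`. -/
def gradeComp {I C : Type} [NonUnitalRing C] [Module ℂ C]
    [SMulCommClass ℂ C C] [IsScalarTower ℂ C C]
    (E : I → I → C) (k l m n : I) : Submodule ℂ C where
  carrier := {a | E k m * a = a ∧ a * E l n = a}
  add_mem' := fun ha hb => ⟨by rw [mul_add, ha.1, hb.1], by rw [add_mul, ha.2, hb.2]⟩
  zero_mem' := ⟨mul_zero _, zero_mul _⟩
  smul_mem' := fun c a ha => ⟨by rw [mul_smul_comm, ha.1], by rw [smul_mul_assoc, ha.2]⟩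

/-- An `I`-partial bialgebra, presented through its total algebra `C`:
a collection of subspaces `A(k,l;m,n)` (cut out by the local units `E k m = 1(k,m)`)
which decompose `C`, together with comultiplication maps `Δ r s`, and a counit `ε`,
subject to the axioms of a partial bialgebra. -/
structure PartialBialgebra (I C : Type) [NonUnitalRing C] [Module ℂ C]
    [SMulCommClass ℂ C C] [IsScalarTower ℂ C C] : Type 1 where
  /-- the local units `1(k,m)` -/
  E : I → I → C
  E_idem : ∀ k m, E k m * E k m = E k m
  E_orth : ∀ k l m n, (k, m) ≠ (l, n) → E k m * E l n = 0
  /-- the total algebra is the direct sum of its homogeneous components -/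
  grading : DirectSum.IsInternal fun x : I × I × I × I =>
    gradeComp E x.1 x.2.1 x.2.2.1 x.2.2.2
  /-- the comultiplication maps `Δ_{rs}` -/
  Δ : I → I → C →ₗ[ℂ] C ⊗[ℂ] C
  /-- the counit -/
  ε : C →ₗ[ℂ] ℂ
  Δ_mem : ∀ k l m n r s, ∀ a ∈ gradeComp E k l m n,
    Δ r s a ∈ LinearMap.range (TensorProduct.map (gradeComp E k l r s).subtype
      (gradeComp E r s m n).subtype)
  coassoc : ∀ r s t u (a : C),
    (TensorProduct.assoc ℂ C C C) ((LinearMap.rTensor C (Δ r s)) (Δ t u a))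
      = (LinearMap.lTensor C (Δ t u)) (Δ r s a)
  counit_l : ∀ k l m n, ∀ a ∈ gradeComp E k l m n,
    (TensorProduct.lid ℂ C) ((LinearMap.rTensor C ε) (Δ k l a)) = a
  counit_r : ∀ k l m n, ∀ a ∈ gradeComp E k l m n,
    (TensorProduct.rid ℂ C) ((LinearMap.lTensor C ε) (Δ m n a)) = a
  ε_supp : ∀ k l m n, (k, l) ≠ (m, n) → ∀ a ∈ gradeComp E k l m n, ε a = 0
  ε_mul : ∀ k l p m n q, ∀ a ∈ gradeComp E k l m n, ∀ b ∈ gradeComp E l p n q,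
    ε (a * b) = ε a * ε b
  ε_E : ∀ k, ε (E k k) = 1
  Δ_E_diag : ∀ k m l, Δ l l (E k m) = E k l ⊗ₜ[ℂ] E l m
  Δ_E_ne : ∀ k m l l', l ≠ l' → Δ l l' (E k m) = 0
  Δ_rcf_row : ∀ (a : C) (r : I), {s | Δ r s a ≠ 0}.Finite
  Δ_rcf_col : ∀ (a : C) (s : I), {r | Δ r s a ≠ 0}.Finite
  Δ_mul : ∀ r s (a b : C), Δ r s (a * b) = ∑ᶠ t, Δ r t a * Δ t s b

namespace PartialBialgebra

variable {I C : Type} [NonUnitalRing C] [Module ℂ C]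
  [SMulCommClass ℂ C C] [IsScalarTower ℂ C C] (B : PartialBialgebra I C)

/-- the homogeneous component `A(k,l;m,n)` of the partial bialgebra -/
def comp (k l m n : I) : Submodule ℂ C := gradeComp B.E k l m n

/-- `λ_p a`, the product of the multiplier `λ_p = Σ_l 1(p,l)` with `a` -/
def lamMul (p : I) (a : C) : C := ∑ᶠ l, B.E p l * a

/-- `a λ_p` -/
def mulLam (a : C) (p : I) : C := ∑ᶠ l, a * B.E p l

/-- `ρ_p a` -/
def rhoMul (p : I) (a : C) : C := ∑ᶠ k, B.E k p * a

/-- `a ρ_p` -/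
def mulRho (a : C) (p : I) : C := ∑ᶠ k, a * B.E k p

/-- `S` is an antipode for the partial bialgebra `B`: it maps each component
`A(k,l;m,n)` to `A(n,m;l,k)` and satisfies `a₍₁₎S(a₍₂₎) = Π^L(a)` and
`S(a₍₁₎)a₍₂₎ = Π^R(a)`, written out in components (cutting the multiplier
`Π^L(a) = Σ_p ε(λ_p a) λ_p` at the column `(r,r)`, resp. `Π^R(a) = Σ_p ε(a ρ_p) ρ_p`
at the row `(s,s)`). -/
def IsAntipode (S : C →ₗ[ℂ] C) : Prop :=
  (∀ k l m n, ∀ a ∈ B.comp k l m n, S a ∈ B.comp n m l k) ∧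
  (∀ (a : C) (r : I),
    ∑ᶠ s, (LinearMap.mul' ℂ C) ((LinearMap.lTensor C S) (B.Δ r s a))
      = ∑ᶠ p, B.ε (B.lamMul p a) • B.E p r) ∧
  (∀ (a : C) (s : I),
    ∑ᶠ r, (LinearMap.mul' ℂ C) ((LinearMap.rTensor C S) (B.Δ r s a))
      = ∑ᶠ p, B.ε (B.mulRho a p) • B.E s p)

/-- a partial Hopf algebra is a partial bialgebra admitting an antipode -/
def IsHopf : Prop := ∃ S : C →ₗ[ℂ] C, B.IsAntipode S

/-- a left invariant integral on a partial bialgebra -/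
def IsLeftIntegral (φ : C →ₗ[ℂ] ℂ) : Prop :=
  (∀ k l m n, ¬(k = l ∧ m = n) → ∀ a ∈ B.comp k l m n, φ a = 0) ∧
  (∀ k, φ (B.E k k) = 1) ∧
  (∀ k p m l, ∀ a ∈ B.comp k p m m,
    (TensorProduct.rid ℂ C) ((LinearMap.lTensor C φ) (B.Δ l l a))
      = if k = p then φ a • B.E k l else 0)

/-- a right invariant integral on a partial bialgebra -/
def IsRightIntegral (φ : C →ₗ[ℂ] ℂ) : Prop :=
  (∀ k l m n, ¬(k = l ∧ m = n) → ∀ a ∈ B.comp k l m n, φ a = 0) ∧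
  (∀ k, φ (B.E k k) = 1) ∧
  (∀ k m p l, ∀ a ∈ B.comp k k m p,
    (TensorProduct.lid ℂ C) ((LinearMap.rTensor C φ) (B.Δ l l a))
      = if m = p then φ a • B.E l m else 0)

/-- an invariant integral is a left and right invariant integral -/
def IsIntegral (φ : C →ₗ[ℂ] ℂ) : Prop := B.IsLeftIntegral φ ∧ B.IsRightIntegral φ

end PartialBialgebra

/-- the componentwise star operation on `C ⊗[ℂ] C`, `(a ⊗ b)* = a* ⊗ b*` -/
def starTmul {C : Type} [NonUnitalRing C] [Module ℂ C]
    [SMulCommClass ℂ C C] [IsScalarTower ℂ C C] [StarRing C] [StarModule ℂ C] :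
    C ⊗[ℂ] C →+ C ⊗[ℂ] C :=
  TensorProduct.liftAddHom
    { toFun := fun a => AddMonoidHom.mk' (fun b => star a ⊗ₜ[ℂ] star b)
        (fun b b' => by simp [star_add, TensorProduct.tmul_add])
      map_zero' := by ext b; simp
      map_add' := fun a a' => by ext b; simp [star_add, TensorProduct.add_tmul] }
    (fun c a b => by
      simp only [AddMonoidHom.mk'_apply, AddMonoidHom.coe_mk, ZeroHom.coe_mk, star_smul]
      rw [TensorProduct.smul_tmul])

namespace PartialBialgebra

variable {I C : Type} [NonUnitalRing C] [Module ℂ C]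
  [SMulCommClass ℂ C C] [IsScalarTower ℂ C C] (B : PartialBialgebra I C)

/-- the conditions making a partial bialgebra a partial *-bialgebra:
the total algebra carries an (antilinear, antimultiplicative) involution
(recorded by the `StarRing` and `StarModule` instances), the local units are
self-adjoint, and `Δ_{rs}(a)* = Δ_{sr}(a*)`. -/
def IsStarBialgebra [StarRing C] [StarModule ℂ C] : Prop :=
  (∀ k m, star (B.E k m) = B.E k m) ∧
  (∀ r s (a : C), B.Δ s r (star a) = starTmul (B.Δ r s a))

/-- the data of a partial compact quantum group: a partial Hopf `*`-algebra with a
positive invariant integral `φ`. -/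
def IsCQG [StarRing C] [StarModule ℂ C] (φ : C →ₗ[ℂ] ℂ) : Prop :=
  B.IsStarBialgebra ∧ B.IsHopf ∧ B.IsIntegral φ ∧ ∀ a : C, 0 ≤ φ (star a * a)

end PartialBialgebra


/-!
In Sweedler notation the first identity reads `S(b₍₁₎) φ(b₍₂₎ a) = a₍₁₎ φ(b a₍₂₎)`. Left
invariance lets one replace the scalar `φ(b₍₂₎ a)` by `(id ⊗ φ)Δ(b₍₂₎ a) = b₍₂₎ a₍₁₎ φ(b₍₃₎ a₍₂₎)`;
coassociativity and the antipode axiom then collapse `S(b₍₁₎) b₍₂₎` to a counit, which is absorbed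
by the counit axiom, leaving `a₍₁₎ φ(b a₍₂₎)`. In the partial setting each Sweedler sum is a sum
over the indices of the `Δ_{rs}`. For `a ∈ A(k,l;m,n)` and `b ∈ A(k',l';m',n')` the grading kills
all but finitely many terms (only `s = k` survives on the left-hand side, only `(r, s) = (l', k')`
on the right), which makes the interchange of the antipode sum with the sum produced by
`Δ(xy) = Δ(x)Δ(y)` legitimate; both sides are biadditive, so homogeneous elements suffice. The
second identity is the mirror image.
-/

open Function LinearMap

section FiniteSupport

variable {M : Type*} [AddCommMonoid M]

theorem finsum_comm_of_finite {α β : Type*} {f : α → β → M} {T : Set β} (hT : T.Finite)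
    (hf₀ : ∀ a, ∀ b ∉ T, f a b = 0) (hf : ∀ b, HasFiniteSupport (f · b)) :
    ∑ᶠ a, ∑ᶠ b, f a b = ∑ᶠ b, ∑ᶠ a, f a b := by
  have hsub : ∀ a, support (f a) ⊆ hT.toFinset := fun a b hb => by
    by_contra h
    exact hb (hf₀ a b (by simpa using h))
  rw [finsum_congr fun a => finsum_eq_sum_of_support_subset _ (hsub a),
    finsum_sum_comm _ _ fun b _ => hf b]
  refine (finsum_eq_sum_of_support_subset _ fun b hb => ?_).symm
  by_contra h
  exact hb (finsum_eq_zero_of_forall_eq_zero fun a => hf₀ a b (by simpa using h))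

theorem hasFiniteSupport_uncurry_of_eq_zero_of_ne_right {α β : Type*} {f : α → β → M} (b₀ : β)
    (hf₀ : ∀ a b, b ≠ b₀ → f a b = 0) (hf : HasFiniteSupport (f · b₀)) :
    HasFiniteSupport (uncurry f) := by
  refine (hf.prod (Set.finite_singleton b₀)).subset fun ⟨a, b⟩ hab => ?_
  by_cases hb : b = b₀
  · subst hb
    exact ⟨hab, rfl⟩
  · exact absurd (hf₀ a b hb) hab

theorem hasFiniteSupport_uncurry_of_eq_zero_of_ne_left {α β : Type*} {f : α → β → M} (a₀ : α)
    (hf₀ : ∀ a b, a ≠ a₀ → f a b = 0) (hf : HasFiniteSupport (f a₀)) :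
    HasFiniteSupport (uncurry f) := by
  refine ((Set.finite_singleton a₀).prod hf).subset fun ⟨a, b⟩ hab => ?_
  by_cases ha : a = a₀
  · subst ha
    exact ⟨rfl, hab⟩
  · exact absurd (hf₀ a b ha) hab

end FiniteSupport

section TensorMaps

variable {ι R M N P Q : Type*} [CommSemiring R] [AddCommMonoid M] [AddCommMonoid N]
  [AddCommMonoid P] [AddCommMonoid Q] [Module R M] [Module R N] [Module R P] [Module R Q]

def finsumLinearMap (L : ι → M →ₗ[R] N) (hL : ∀ x, HasFiniteSupport fun i => L i x) :
    M →ₗ[R] N where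
  toFun x := ∑ᶠ i, L i x
  map_add' x y := by simp only [map_add]; exact finsum_add_distrib (hL x) (hL y)
  map_smul' c x := by simp only [map_smul, RingHom.id_apply]; exact (smul_finsum' c (hL x)).symm

theorem finsumLinearMap_apply {L : ι → M →ₗ[R] N} (hL : ∀ x, HasFiniteSupport fun i => L i x)
    (x : M) : finsumLinearMap L hL x = ∑ᶠ i, L i x := rfl

theorem hasFiniteSupport_map_right {L : ι → M →ₗ[R] N}
    (hL : ∀ x, HasFiniteSupport fun i => L i x) (f : P →ₗ[R] Q) (u : P ⊗[R] M) :
    HasFiniteSupport fun i => map f (L i) u := by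
  induction u using TensorProduct.induction_on with
  | zero => simp [HasFiniteSupport]
  | tmul p x => exact (hL x).fun_comp (g := (f p ⊗ₜ[R] ·)) (TensorProduct.tmul_zero N (f p))
  | add u v hu hv => exact (hu.add hv).subset fun i => by simp

theorem hasFiniteSupport_map_left {L : ι → M →ₗ[R] N}
    (hL : ∀ x, HasFiniteSupport fun i => L i x) (f : P →ₗ[R] Q) (u : M ⊗[R] P) :
    HasFiniteSupport fun i => map (L i) f u := by
  induction u using TensorProduct.induction_on with
  | zero => simp [HasFiniteSupport]
  | tmul x p => exact (hL x).fun_comp (g := (· ⊗ₜ[R] f p)) (TensorProduct.zero_tmul N (f p))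
  | add u v hu hv => exact (hu.add hv).subset fun i => by simp

theorem map_finsumLinearMap_right {L : ι → M →ₗ[R] N}
    (hL : ∀ x, HasFiniteSupport fun i => L i x) (f : P →ₗ[R] Q) (u : P ⊗[R] M) :
    map f (finsumLinearMap L hL) u = ∑ᶠ i, map f (L i) u := by
  induction u using TensorProduct.induction_on with
  | zero => simp
  | tmul p x => exact map_finsum (TensorProduct.mk R Q N (f p)) (hL x)
  | add u v hu hv =>
    rw [map_add, hu, hv, ← finsum_add_distrib (hasFiniteSupport_map_right hL f u)
      (hasFiniteSupport_map_right hL f v)]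
    simp only [map_add]

theorem map_finsumLinearMap_left {L : ι → M →ₗ[R] N}
    (hL : ∀ x, HasFiniteSupport fun i => L i x) (f : P →ₗ[R] Q) (u : M ⊗[R] P) :
    map (finsumLinearMap L hL) f u = ∑ᶠ i, map (L i) f u := by
  induction u using TensorProduct.induction_on with
  | zero => simp
  | tmul x p => exact map_finsum ((TensorProduct.mk R N Q).flip (f p)) (hL x)
  | add u v hu hv =>
    rw [map_add, hu, hv, ← finsum_add_distrib (hasFiniteSupport_map_left hL f u)
      (hasFiniteSupport_map_left hL f v)]
    simp only [map_add]

theorem LinearMap.eq_on_range_map_subtype {p : Submodule R M} {q : Submodule R N}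
    {f g : M ⊗[R] N →ₗ[R] P} (h : ∀ x ∈ p, ∀ y ∈ q, f (x ⊗ₜ y) = g (x ⊗ₜ y)) {u : M ⊗[R] N}
    (hu : u ∈ range (map p.subtype q.subtype)) : f u = g u := by
  obtain ⟨z, rfl⟩ := hu
  exact LinearMap.congr_fun (TensorProduct.ext' (g := f ∘ₗ map p.subtype q.subtype)
    (h := g ∘ₗ map p.subtype q.subtype) fun x y => h x x.2 y y.2) z

end TensorMaps

section Slices

variable {M : Type*} [AddCommMonoid M] [Module ℂ M]

def rightSlice (φ : M →ₗ[ℂ] ℂ) : M ⊗[ℂ] M →ₗ[ℂ] M :=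
  (TensorProduct.rid ℂ M).toLinearMap ∘ₗ lTensor M φ

def leftSlice (φ : M →ₗ[ℂ] ℂ) : M ⊗[ℂ] M →ₗ[ℂ] M :=
  (TensorProduct.lid ℂ M).toLinearMap ∘ₗ rTensor M φ

theorem rightSlice_apply (φ : M →ₗ[ℂ] ℂ) (w : M ⊗[ℂ] M) :
    rightSlice φ w = TensorProduct.rid ℂ M (lTensor M φ w) := rfl

theorem leftSlice_apply (φ : M →ₗ[ℂ] ℂ) (w : M ⊗[ℂ] M) :
    leftSlice φ w = TensorProduct.lid ℂ M (rTensor M φ w) := rfl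

@[simp]
theorem rightSlice_tmul (φ : M →ₗ[ℂ] ℂ) (x y : M) : rightSlice φ (x ⊗ₜ y) = φ y • x := rfl

@[simp]
theorem leftSlice_tmul (φ : M →ₗ[ℂ] ℂ) (x y : M) : leftSlice φ (x ⊗ₜ y) = φ x • y := rfl

/-- `rightSliceBy φ μ x = id ⊗ φ(μ x ·)`: for `μ = mul ℂ C` this is `w ↦ (id ⊗ φ)((1 ⊗ x) w)`,
for `μ = (mul ℂ C).flip` it is `w ↦ (id ⊗ φ)(w (1 ⊗ x))`. `leftSliceBy` is the same with
`φ ⊗ id`. -/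
def rightSliceBy (φ : M →ₗ[ℂ] ℂ) (μ : M →ₗ[ℂ] M →ₗ[ℂ] M) : M →ₗ[ℂ] M ⊗[ℂ] M →ₗ[ℂ] M :=
  llcomp ℂ _ _ _ (TensorProduct.rid ℂ M).toLinearMap ∘ₗ lTensorHom M ∘ₗ llcomp ℂ M M ℂ φ ∘ₗ μ

def leftSliceBy (φ : M →ₗ[ℂ] ℂ) (μ : M →ₗ[ℂ] M →ₗ[ℂ] M) : M →ₗ[ℂ] M ⊗[ℂ] M →ₗ[ℂ] M :=
  llcomp ℂ _ _ _ (TensorProduct.lid ℂ M).toLinearMap ∘ₗ rTensorHom M ∘ₗ llcomp ℂ M M ℂ φ ∘ₗ μ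

theorem rightSliceBy_apply (φ : M →ₗ[ℂ] ℂ) (μ : M →ₗ[ℂ] M →ₗ[ℂ] M) (x : M) (w : M ⊗[ℂ] M) :
    rightSliceBy φ μ x w = rightSlice (φ ∘ₗ μ x) w := rfl

theorem leftSliceBy_apply (φ : M →ₗ[ℂ] ℂ) (μ : M →ₗ[ℂ] M →ₗ[ℂ] M) (x : M) (w : M ⊗[ℂ] M) :
    leftSliceBy φ μ x w = leftSlice (φ ∘ₗ μ x) w := rfl

end Slices

section SliceProducts

variable {C : Type*} [NonUnitalRing C] [Module ℂ C] [SMulCommClass ℂ C C] [IsScalarTower ℂ C C]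

theorem rightSlice_mul (φ : C →ₗ[ℂ] ℂ) (w v : C ⊗[ℂ] C) :
    rightSlice φ (w * v) = mul' ℂ C (lTensor C ((rightSliceBy φ (mul ℂ C)).flip v) w) := by
  induction w using TensorProduct.induction_on with
  | zero => simp
  | add w₁ w₂ h₁ h₂ => simp only [add_mul, map_add, h₁, h₂]
  | tmul x c =>
    induction v using TensorProduct.induction_on with
    | zero => simp
    | add v₁ v₂ h₁ h₂ => simp only [mul_add, map_add, lTensor_add, LinearMap.add_apply, h₁, h₂]
    | tmul y d => simp [rightSliceBy_apply, Algebra.TensorProduct.tmul_mul_tmul]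

theorem leftSlice_mul (φ : C →ₗ[ℂ] ℂ) (v w : C ⊗[ℂ] C) :
    leftSlice φ (v * w) = mul' ℂ C (rTensor C ((leftSliceBy φ (mul ℂ C).flip).flip v) w) := by
  induction w using TensorProduct.induction_on with
  | zero => simp
  | add w₁ w₂ h₁ h₂ => simp only [mul_add, map_add, h₁, h₂]
  | tmul c x =>
    induction v using TensorProduct.induction_on with
    | zero => simp
    | add v₁ v₂ h₁ h₂ => simp only [add_mul, map_add, rTensor_add, LinearMap.add_apply, h₁, h₂]
    | tmul y d => simp [leftSliceBy_apply, Algebra.TensorProduct.tmul_mul_tmul, smul_mul_assoc]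

theorem mul'_map_mul'_assoc (f g h : C →ₗ[ℂ] C) (w : (C ⊗[ℂ] C) ⊗[ℂ] C) :
    mul' ℂ C (map f (mul' ℂ C ∘ₗ map g h) (TensorProduct.assoc ℂ C C C w))
      = mul' ℂ C (map (mul' ℂ C ∘ₗ map f g) h w) := by
  induction w using TensorProduct.induction_on with
  | zero => simp
  | add w₁ w₂ h₁ h₂ => simp only [map_add, h₁, h₂]
  | tmul xy z =>
    induction xy using TensorProduct.induction_on with
    | zero => simp
    | add w₁ w₂ h₁ h₂ => simp only [add_tmul, map_add, h₁, h₂]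
    | tmul x y => simp [mul_assoc]

end SliceProducts

namespace PartialBialgebra

variable {I C : Type} [NonUnitalRing C] [Module ℂ C] [SMulCommClass ℂ C C] [IsScalarTower ℂ C C]
  (B : PartialBialgebra I C)

theorem mul_eq_zero_of_ne {x y : C} {l n k m : I} (hx : x * B.E l n = x) (hy : B.E k m * y = y)
    (h : (l, n) ≠ (k, m)) : x * y = 0 := by
  rw [← hx, ← hy, mul_assoc, ← mul_assoc (B.E l n), B.E_orth _ _ _ _ h, zero_mul, mul_zero]

theorem mul_mem_comp {x y : C} {k l m n k' l' m' n' : I} (hx : x ∈ B.comp k l m n)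
    (hy : y ∈ B.comp k' l' m' n') : x * y ∈ B.comp k l' m n' :=
  ⟨by rw [← mul_assoc, hx.1], by rw [mul_assoc, hy.2]⟩

theorem induction_on_homogeneous {motive : C → Prop} (zero : motive 0)
    (add : ∀ x y, motive x → motive y → motive (x + y))
    (homogeneous : ∀ k l m n, ∀ x ∈ B.comp k l m n, motive x) (x : C) : motive x := by
  have hx : x ∈ ⨆ i : I × I × I × I, B.comp i.1 i.2.1 i.2.2.1 i.2.2.2 :=
    B.grading.submodule_iSup_eq_top ▸ Submodule.mem_top
  exact Submodule.iSup_induction _ (motive := motive) hx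
    (fun i x hx => homogeneous _ _ _ _ x hx) zero add

theorem hasFiniteSupport_Δ_left (y : C) (s : I) : HasFiniteSupport fun r => B.Δ r s y :=
  B.Δ_rcf_col y s

theorem hasFiniteSupport_Δ_right (y : C) (r : I) : HasFiniteSupport fun s => B.Δ r s y :=
  B.Δ_rcf_row y r

section Vanishing

variable {ψ : C →ₗ[ℂ] ℂ} {r s : I}

theorem lTensor_Δ_eq_zero_of_mem {b : C} {k l m n : I} (hb : b ∈ B.comp k l m n)
    (hψ : ∀ y ∈ B.comp r s m n, ψ y = 0) : lTensor C ψ (B.Δ r s b) = 0 :=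
  eq_on_range_map_subtype (g := 0) (fun x _ y hy => by simp [hψ y hy]) (B.Δ_mem k l m n r s b hb)

theorem rTensor_Δ_eq_zero_of_mem {b : C} {k l m n : I} (hb : b ∈ B.comp k l m n)
    (hψ : ∀ x ∈ B.comp k l r s, ψ x = 0) : rTensor C ψ (B.Δ r s b) = 0 :=
  eq_on_range_map_subtype (g := 0) (fun x hx y _ => by simp [hψ x hx]) (B.Δ_mem k l m n r s b hb)

theorem lTensor_Δ_eq_zero (hψ : ∀ m n, ∀ y ∈ B.comp r s m n, ψ y = 0) (b : C) :
    lTensor C ψ (B.Δ r s b) = 0 := by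
  induction b using B.induction_on_homogeneous with
  | zero => simp
  | add x y hx hy => rw [map_add, map_add, hx, hy, add_zero]
  | homogeneous k l m n x hx => exact B.lTensor_Δ_eq_zero_of_mem hx (hψ m n)

theorem rTensor_Δ_eq_zero (hψ : ∀ k l, ∀ x ∈ B.comp k l r s, ψ x = 0) (b : C) :
    rTensor C ψ (B.Δ r s b) = 0 := by
  induction b using B.induction_on_homogeneous with
  | zero => simp
  | add x y hx hy => rw [map_add, map_add, hx, hy, add_zero]
  | homogeneous k l m n x hx => exact B.rTensor_Δ_eq_zero_of_mem hx (hψ k l)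

end Vanishing

theorem mulRho_of_mul_E {x : C} {l t : I} (hx : x * B.E l t = x) (p : I) :
    B.mulRho x p = if p = t then x else 0 := by
  have hne : ∀ K, (l, t) ≠ (K, p) → x * B.E K p = 0 := fun K h =>
    B.mul_eq_zero_of_ne hx (B.E_idem K p) h
  split_ifs with hp
  · subst hp
    rw [mulRho, finsum_eq_single _ l fun K hK => hne K (by simp [Ne.symm hK]), hx]
  · exact finsum_eq_zero_of_forall_eq_zero fun K => hne K (by simp [Ne.symm hp])

theorem lamMul_of_E_mul {x : C} {t m : I} (hx : B.E t m * x = x) (p : I) :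
    B.lamMul p x = if p = t then x else 0 := by
  have hne : ∀ L, (p, L) ≠ (t, m) → B.E p L * x = 0 := fun L h =>
    B.mul_eq_zero_of_ne (B.E_idem p L) hx h
  split_ifs with hp
  · subst hp
    rw [lamMul, finsum_eq_single _ m fun L hL => hne L (by simp [hL]), hx]
  · exact finsum_eq_zero_of_forall_eq_zero fun L => hne L (by simp [hp])

section Hypotheses

variable {B}

theorem IsAntipode.finsum_mul'_rTensor {S : C →ₗ[ℂ] C} (hS : B.IsAntipode S) {x : C} {l t : I}
    (hx : x * B.E l t = x) (k : I) :
    ∑ᶠ r, mul' ℂ C (rTensor C S (B.Δ r k x)) = B.ε x • B.E k t := by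
  rw [hS.2.2 x k, finsum_eq_single _ t fun p hp => by
    rw [B.mulRho_of_mul_E hx, if_neg hp, map_zero, zero_smul], B.mulRho_of_mul_E hx, if_pos rfl]

theorem IsAntipode.finsum_mul'_lTensor {S : C →ₗ[ℂ] C} (hS : B.IsAntipode S) {x : C} {t m : I}
    (hx : B.E t m * x = x) (n : I) :
    ∑ᶠ s, mul' ℂ C (lTensor C S (B.Δ n s x)) = B.ε x • B.E t n := by
  rw [hS.2.1 x n, finsum_eq_single _ t fun p hp => by
    rw [B.lamMul_of_E_mul hx, if_neg hp, map_zero, zero_smul], B.lamMul_of_E_mul hx, if_pos rfl]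

theorem IsLeftIntegral.rightSlice_Δ {φ : C →ₗ[ℂ] ℂ} (hφ : B.IsLeftIntegral φ) {c : C}
    {k p m q : I} (hc : c ∈ B.comp k p m q) (u : I) :
    rightSlice φ (B.Δ u u c) = φ c • B.E k u := by
  by_cases hmq : m = q
  · subst hmq
    rw [rightSlice_apply, hφ.2.2 k p m u c hc]
    split_ifs with hkp
    · subst hkp
      rfl
    · rw [hφ.1 k p m m (fun h => hkp h.1) c hc, zero_smul]
  · rw [hφ.1 k p m q (fun h => hmq h.2) c hc, zero_smul, rightSlice_apply,
      B.lTensor_Δ_eq_zero_of_mem hc fun y hy => hφ.1 u u m q (fun h => hmq h.2) y hy, map_zero]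

theorem IsRightIntegral.leftSlice_Δ {φ : C →ₗ[ℂ] ℂ} (hφ : B.IsRightIntegral φ) {c : C}
    {k p m q : I} (hc : c ∈ B.comp k p m q) (u : I) :
    leftSlice φ (B.Δ u u c) = φ c • B.E u q := by
  by_cases hkp : k = p
  · subst hkp
    rw [leftSlice_apply, hφ.2.2 k m q u c hc]
    split_ifs with hmq
    · subst hmq
      rfl
    · rw [hφ.1 k k m q (fun h => hmq h.2) c hc, zero_smul]
  · rw [hφ.1 k p m q (fun h => hkp h.1) c hc, zero_smul, leftSlice_apply,
      B.rTensor_Δ_eq_zero_of_mem hc fun x hx => hφ.1 k p u u (fun h => hkp h.1) x hx, map_zero]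

end Hypotheses

section SliceSum

/-- `(id ⊗ φ)(Δ(b)(1 ⊗ a))` is `B.sliceSum (rightSliceBy φ (mul ℂ C).flip) a b`. -/
def sliceSum (β : C →ₗ[ℂ] C ⊗[ℂ] C →ₗ[ℂ] C) (x y : C) : C := ∑ᶠ r, ∑ᶠ s, β x (B.Δ r s y)

theorem hasFiniteSupport_slices_of_homogeneous (β : C →ₗ[ℂ] C ⊗[ℂ] C →ₗ[ℂ] C)
    (h : ∀ k l m n, ∀ x ∈ B.comp k l m n, ∀ y,
      HasFiniteSupport (uncurry fun r s => β x (B.Δ r s y))) (x y : C) :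
    HasFiniteSupport (uncurry fun r s => β x (B.Δ r s y)) := by
  induction x using B.induction_on_homogeneous with
  | zero => exact Set.finite_empty.subset fun ⟨r, s⟩ hp => hp (by simp)
  | add x₁ x₂ h₁ h₂ => exact (h₁.add h₂).subset fun ⟨r, s⟩ => by simp
  | homogeneous k l m n x hx => exact h k l m n x hx y

variable {B} {β : C →ₗ[ℂ] C ⊗[ℂ] C →ₗ[ℂ] C}

theorem sliceSum_eq_finsum
    (hβ : ∀ x y, HasFiniteSupport (uncurry fun r s => β x (B.Δ r s y))) (x y : C) :
    B.sliceSum β x y = ∑ᶠ p : I × I, β x (B.Δ p.1 p.2 y) :=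
  (finsum_curry _ (hβ x y)).symm

theorem sliceSum_add_left
    (hβ : ∀ x y, HasFiniteSupport (uncurry fun r s => β x (B.Δ r s y))) (x₁ x₂ y : C) :
    B.sliceSum β (x₁ + x₂) y = B.sliceSum β x₁ y + B.sliceSum β x₂ y := by
  simp only [sliceSum_eq_finsum hβ, map_add, LinearMap.add_apply]
  exact finsum_add_distrib (hβ x₁ y) (hβ x₂ y)

theorem sliceSum_add_right
    (hβ : ∀ x y, HasFiniteSupport (uncurry fun r s => β x (B.Δ r s y))) (x y₁ y₂ : C) :
    B.sliceSum β x (y₁ + y₂) = B.sliceSum β x y₁ + B.sliceSum β x y₂ := by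
  simp only [sliceSum_eq_finsum hβ, map_add]
  exact finsum_add_distrib (hβ x y₁) (hβ x y₂)

end SliceSum

section LeftInvariant

variable {φ : C →ₗ[ℂ] ℂ} {S : C →ₗ[ℂ] C} {a b : C} {k l m n k' l' m' n' : I}

theorem rightSlice_mulRight_Δ_eq_zero (ha : B.E k m * a = a) (b : C) {r s : I} (hs : s ≠ k) :
    rightSlice (φ ∘ₗ mulRight ℂ a) (B.Δ r s b) = 0 := by
  rw [rightSlice_apply, B.lTensor_Δ_eq_zero (fun M N y hy => ?_) b, map_zero]
  simp [B.mul_eq_zero_of_ne hy.2 ha (by simp [hs])]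

theorem rightSlice_mulLeft_Δ_eq_zero (hb : b * B.E l n = b) (a : C) {r s : I} (hr : r ≠ l) :
    rightSlice (φ ∘ₗ mulLeft ℂ b) (B.Δ r s a) = 0 := by
  rw [rightSlice_apply, B.lTensor_Δ_eq_zero (fun M N y hy => ?_) a, map_zero]
  simp [B.mul_eq_zero_of_ne hb hy.1 (by simp [Ne.symm hr])]

theorem hasFiniteSupport_rightSlice_mulRight (a b : C) :
    HasFiniteSupport (uncurry fun r s => rightSliceBy φ (mul ℂ C).flip a (B.Δ r s b)) :=
  B.hasFiniteSupport_slices_of_homogeneous _ (fun _ _ _ _ _ ha b =>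
    hasFiniteSupport_uncurry_of_eq_zero_of_ne_right _
      (fun _ _ hs => B.rightSlice_mulRight_Δ_eq_zero ha.1 b hs)
      ((B.hasFiniteSupport_Δ_left b _).fun_comp (map_zero _))) a b

theorem sliceSum_rightSlice_mulRight_of_mem (ha : a ∈ B.comp k l m n) (b : C) :
    B.sliceSum (rightSliceBy φ (mul ℂ C).flip) a b
      = ∑ᶠ r, rightSlice (φ ∘ₗ mulRight ℂ a) (B.Δ r k b) :=
  finsum_congr fun _ => finsum_eq_single _ k fun _ hs => B.rightSlice_mulRight_Δ_eq_zero ha.1 b hs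

theorem hasFiniteSupport_mul'_rTensor_Δ (S : C →ₗ[ℂ] C) (k : I) (x : C) :
    HasFiniteSupport fun r => (mul' ℂ C ∘ₗ rTensor C S ∘ₗ B.Δ r k) x :=
  (B.hasFiniteSupport_Δ_left x k).fun_comp (map_zero (mul' ℂ C ∘ₗ rTensor C S))

theorem mul'_map_rightSlice_Δ_mulRight (φ : C →ₗ[ℂ] ℂ) (S : C →ₗ[ℂ] C) (a b : C) (k k' r : I) :
    mul' ℂ C (map S (rightSlice φ ∘ₗ B.Δ k' k' ∘ₗ mulRight ℂ a) (B.Δ r k b))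
      = ∑ᶠ t, mul' ℂ C (map (mul' ℂ C ∘ₗ rTensor C S ∘ₗ B.Δ r k)
          ((rightSliceBy φ (mul ℂ C)).flip (B.Δ t k' a)) (B.Δ k' t b)) := by
  set R : I → C →ₗ[ℂ] C := fun t => (rightSliceBy φ (mul ℂ C)).flip (B.Δ t k' a)
  have hfin : ∀ y, HasFiniteSupport fun t => (mul' ℂ C ∘ₗ lTensor C (R t) ∘ₗ B.Δ k' t) y :=
    fun y => (B.hasFiniteSupport_Δ_right y k').subset fun t ht h0 => ht (by simp [h0])
  have hQ : rightSlice φ ∘ₗ B.Δ k' k' ∘ₗ mulRight ℂ a = finsumLinearMap _ hfin := by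
    ext y
    have hprod : HasFiniteSupport fun t => B.Δ k' t y * B.Δ t k' a :=
      (B.hasFiniteSupport_Δ_right y k').subset fun t ht h0 => ht (by simp [h0])
    simp only [LinearMap.comp_apply, mulRight_apply, finsumLinearMap_apply, B.Δ_mul,
      map_finsum (rightSlice φ) hprod, rightSlice_mul]
    rfl
  rw [hQ, map_finsumLinearMap_right, map_finsum (mul' ℂ C) (hasFiniteSupport_map_right hfin S _)]
  refine finsum_congr fun t => ?_
  calc mul' ℂ C (map S (mul' ℂ C ∘ₗ lTensor C (R t) ∘ₗ B.Δ k' t) (B.Δ r k b))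
      = mul' ℂ C (map S (mul' ℂ C ∘ₗ lTensor C (R t)) (lTensor C (B.Δ k' t) (B.Δ r k b))) :=
        congrArg _ (LinearMap.congr_fun (map_comp_lTensor (f := S)
          (g := mul' ℂ C ∘ₗ lTensor C (R t)) (g' := B.Δ k' t)) _).symm
    _ = mul' ℂ C (map S (mul' ℂ C ∘ₗ lTensor C (R t))
          (TensorProduct.assoc ℂ C C C (rTensor C (B.Δ r k) (B.Δ k' t b)))) := by
        rw [B.coassoc]
    _ = mul' ℂ C (map (mul' ℂ C ∘ₗ rTensor C S) (R t) (rTensor C (B.Δ r k) (B.Δ k' t b))) :=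
        mul'_map_mul'_assoc S id (R t) _
    _ = mul' ℂ C (map (mul' ℂ C ∘ₗ rTensor C S ∘ₗ B.Δ r k) (R t) (B.Δ k' t b)) :=
        congrArg _ (LinearMap.congr_fun (map_comp_rTensor (f := mul' ℂ C ∘ₗ rTensor C S)
          (g := R t) (f' := B.Δ r k)) _)

theorem finsum_E_mul_leftSlice_ε_Δ (hb : b ∈ B.comp k' l' m' n') (R : I → C →ₗ[ℂ] C)
    (k : I) : ∑ᶠ t, B.E k t * R t (leftSlice B.ε (B.Δ k' t b)) = B.E k l' * R l' b := by
  rw [finsum_eq_single _ l' fun t ht => by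
      rw [leftSlice_apply, B.rTensor_Δ_eq_zero_of_mem hb fun x hx =>
        B.ε_supp _ _ _ _ (by simp [Ne.symm ht]) x hx, map_zero, map_zero, mul_zero],
    leftSlice_apply, B.counit_l k' l' m' n' b hb]

theorem E_mul_rightSlice_Δ (ha : a ∈ B.comp k l m n) (ψ : C →ₗ[ℂ] ℂ) (r s : I) :
    B.E k r * rightSlice ψ (B.Δ r s a) = rightSlice ψ (B.Δ r s a) :=
  eq_on_range_map_subtype (f := mulLeft ℂ (B.E k r) ∘ₗ rightSlice ψ) (g := rightSlice ψ)
    (fun x hx y _ => by simp [hx.1]) (B.Δ_mem k l m n r s a ha)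

variable {B}

theorem IsLeftIntegral.rightSlice_mulLeft_Δ_eq_zero (hφ : B.IsLeftIntegral φ)
    (hb : b ∈ B.comp k l m n) (a : C) {r s : I} (hs : s ≠ k) :
    rightSlice (φ ∘ₗ mulLeft ℂ b) (B.Δ r s a) = 0 := by
  rw [rightSlice_apply, B.lTensor_Δ_eq_zero (fun M N y hy => ?_) a, map_zero]
  simpa using hφ.1 k s m N (fun h => hs h.1.symm) _ (B.mul_mem_comp hb hy)

theorem IsLeftIntegral.hasFiniteSupport_rightSlice_mulLeft (hφ : B.IsLeftIntegral φ) (b a : C) :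
    HasFiniteSupport (uncurry fun r s => rightSliceBy φ (mul ℂ C) b (B.Δ r s a)) :=
  B.hasFiniteSupport_slices_of_homogeneous _ (fun k _ _ _ _ hb a =>
    hasFiniteSupport_uncurry_of_eq_zero_of_ne_left _
      (fun _ _ hr => B.rightSlice_mulLeft_Δ_eq_zero hb.2 a hr)
      ((Set.finite_singleton k).subset fun _ hs =>
        by_contra fun h => hs (hφ.rightSlice_mulLeft_Δ_eq_zero hb a h))) b a

theorem IsLeftIntegral.sliceSum_rightSlice_mulLeft_of_mem (hφ : B.IsLeftIntegral φ)
    (hb : b ∈ B.comp k' l' m' n') (a : C) :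
    B.sliceSum (rightSliceBy φ (mul ℂ C)) b a = rightSlice (φ ∘ₗ mulLeft ℂ b) (B.Δ l' k' a) :=
  (finsum_eq_single _ l' fun _ hr => finsum_eq_zero_of_forall_eq_zero fun _ =>
      B.rightSlice_mulLeft_Δ_eq_zero hb.2 a hr).trans
    (finsum_eq_single _ k' fun _ hs => hφ.rightSlice_mulLeft_Δ_eq_zero hb a hs)

theorem IsLeftIntegral.antipode_rightSlice_mulRight (hφ : B.IsLeftIntegral φ)
    (hS : B.IsAntipode S) (ha : a ∈ B.comp k l m n) (hb : b ∈ B.comp k' l' m' n') (r : I) :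
    S (rightSlice (φ ∘ₗ mulRight ℂ a) (B.Δ r k b))
      = mul' ℂ C (map S (rightSlice φ ∘ₗ B.Δ k' k' ∘ₗ mulRight ℂ a) (B.Δ r k b)) := by
  refine eq_on_range_map_subtype (f := S ∘ₗ rightSlice (φ ∘ₗ mulRight ℂ a))
    (g := mul' ℂ C ∘ₗ map S _) (fun x hx y hy => ?_) (B.Δ_mem k' l' m' n' r k b hb)
  simp only [LinearMap.comp_apply, rightSlice_tmul, map_tmul, mul'_apply, mulRight_apply, map_smul,
    hφ.rightSlice_Δ (B.mul_mem_comp hy ha), mul_smul_comm, (hS.1 _ _ _ _ x hx).2]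

theorem IsAntipode.finsum_mul'_map_rTensor_Δ (hS : B.IsAntipode S) (hb : b ∈ B.comp k' l' m' n')
    (R : C →ₗ[ℂ] C) (k t : I) :
    ∑ᶠ r, mul' ℂ C (map (mul' ℂ C ∘ₗ rTensor C S ∘ₗ B.Δ r k) R (B.Δ k' t b))
      = B.E k t * R (leftSlice B.ε (B.Δ k' t b)) := by
  have hL := B.hasFiniteSupport_mul'_rTensor_Δ S k
  rw [← map_finsum (mul' ℂ C) (hasFiniteSupport_map_left hL R _), ← map_finsumLinearMap_left hL]
  refine eq_on_range_map_subtype (f := mul' ℂ C ∘ₗ map (finsumLinearMap _ hL) R)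
    (g := mulLeft ℂ (B.E k t) ∘ₗ R ∘ₗ leftSlice B.ε) (fun x hx y _ => ?_)
    (B.Δ_mem k' l' m' n' k' t b hb)
  simp [finsumLinearMap_apply, hS.finsum_mul'_rTensor hx.2 k, smul_mul_assoc]

theorem IsLeftIntegral.antipode_finsum_rightSlice_mulRight (hφ : B.IsLeftIntegral φ)
    (hS : B.IsAntipode S) (ha : a ∈ B.comp k l m n) (hb : b ∈ B.comp k' l' m' n') :
    S (∑ᶠ r, rightSlice (φ ∘ₗ mulRight ℂ a) (B.Δ r k b))
      = rightSlice (φ ∘ₗ mulLeft ℂ b) (B.Δ l' k' a) := by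
  set R : I → C →ₗ[ℂ] C := fun t => (rightSliceBy φ (mul ℂ C)).flip (B.Δ t k' a)
  set F : I → I → C := fun r t =>
    mul' ℂ C (map (mul' ℂ C ∘ₗ rTensor C S ∘ₗ B.Δ r k) (R t) (B.Δ k' t b))
  rw [map_finsum S ((B.hasFiniteSupport_Δ_left b k).fun_comp (map_zero _))]
  calc ∑ᶠ r, S (rightSlice (φ ∘ₗ mulRight ℂ a) (B.Δ r k b))
      = ∑ᶠ r, ∑ᶠ t, F r t := finsum_congr fun r => by
        rw [hφ.antipode_rightSlice_mulRight hS ha hb, B.mul'_map_rightSlice_Δ_mulRight]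
    _ = ∑ᶠ t, ∑ᶠ r, F r t :=
        finsum_comm_of_finite (B.hasFiniteSupport_Δ_right b k')
          (fun r t ht => by simp only [F, notMem_support.mp ht, map_zero])
          (fun t => (hasFiniteSupport_map_left (B.hasFiniteSupport_mul'_rTensor_Δ S k)
            (R t) _).fun_comp (map_zero _))
    _ = ∑ᶠ t, B.E k t * R t (leftSlice B.ε (B.Δ k' t b)) :=
        finsum_congr fun t => hS.finsum_mul'_map_rTensor_Δ hb (R t) k t
    _ = B.E k l' * R l' b := B.finsum_E_mul_leftSlice_ε_Δ hb R k
    _ = rightSlice (φ ∘ₗ mulLeft ℂ b) (B.Δ l' k' a) := B.E_mul_rightSlice_Δ ha _ l' k'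

theorem IsLeftIntegral.antipode_sliceSum (hφ : B.IsLeftIntegral φ) (hS : B.IsAntipode S)
    (a b : C) :
    S (B.sliceSum (rightSliceBy φ (mul ℂ C).flip) a b)
      = B.sliceSum (rightSliceBy φ (mul ℂ C)) b a := by
  have h₁ := B.hasFiniteSupport_rightSlice_mulRight (φ := φ)
  have h₂ := hφ.hasFiniteSupport_rightSlice_mulLeft
  induction a using B.induction_on_homogeneous with
  | zero => simp [sliceSum]
  | add a₁ a₂ ih₁ ih₂ => rw [sliceSum_add_left h₁, map_add, ih₁, ih₂, sliceSum_add_right h₂]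
  | homogeneous k l m n a ha =>
    induction b using B.induction_on_homogeneous with
    | zero => simp [sliceSum]
    | add b₁ b₂ ih₁ ih₂ => rw [sliceSum_add_right h₁, map_add, ih₁, ih₂, sliceSum_add_left h₂]
    | homogeneous k' l' m' n' b hb =>
      rw [B.sliceSum_rightSlice_mulRight_of_mem ha, hφ.sliceSum_rightSlice_mulLeft_of_mem hb,
        hφ.antipode_finsum_rightSlice_mulRight hS ha hb]

end LeftInvariant

section RightInvariant

variable {φ : C →ₗ[ℂ] ℂ} {S : C →ₗ[ℂ] C} {a b : C} {k l m n k' l' m' n' : I}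

theorem leftSlice_mulLeft_Δ_eq_zero (ha : a * B.E l n = a) (b : C) {r s : I} (hr : r ≠ n) :
    leftSlice (φ ∘ₗ mulLeft ℂ a) (B.Δ r s b) = 0 := by
  rw [leftSlice_apply, B.rTensor_Δ_eq_zero (fun K L x hx => ?_) b, map_zero]
  simp [B.mul_eq_zero_of_ne ha hx.1 (by simp [Ne.symm hr])]

theorem leftSlice_mulRight_Δ_eq_zero (hb : B.E k m * b = b) (a : C) {r s : I} (hs : s ≠ m) :
    leftSlice (φ ∘ₗ mulRight ℂ b) (B.Δ r s a) = 0 := by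
  rw [leftSlice_apply, B.rTensor_Δ_eq_zero (fun K L x hx => ?_) a, map_zero]
  simp [B.mul_eq_zero_of_ne hx.2 hb (by simp [hs])]

theorem hasFiniteSupport_leftSlice_mulLeft (a b : C) :
    HasFiniteSupport (uncurry fun r s => leftSliceBy φ (mul ℂ C) a (B.Δ r s b)) :=
  B.hasFiniteSupport_slices_of_homogeneous _ (fun _ _ _ _ _ ha b =>
    hasFiniteSupport_uncurry_of_eq_zero_of_ne_left _
      (fun _ _ hr => B.leftSlice_mulLeft_Δ_eq_zero ha.2 b hr)
      ((B.hasFiniteSupport_Δ_right b _).fun_comp (map_zero _))) a b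

theorem sliceSum_leftSlice_mulLeft_of_mem (ha : a ∈ B.comp k l m n) (b : C) :
    B.sliceSum (leftSliceBy φ (mul ℂ C)) a b
      = ∑ᶠ s, leftSlice (φ ∘ₗ mulLeft ℂ a) (B.Δ n s b) :=
  finsum_eq_single _ n fun _ hr => finsum_eq_zero_of_forall_eq_zero fun _ =>
    B.leftSlice_mulLeft_Δ_eq_zero ha.2 b hr

theorem hasFiniteSupport_mul'_lTensor_Δ (S : C →ₗ[ℂ] C) (n : I) (y : C) :
    HasFiniteSupport fun s => (mul' ℂ C ∘ₗ lTensor C S ∘ₗ B.Δ n s) y :=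
  (B.hasFiniteSupport_Δ_right y n).fun_comp (map_zero (mul' ℂ C ∘ₗ lTensor C S))

theorem mul'_map_leftSlice_Δ_mulLeft (φ : C →ₗ[ℂ] ℂ) (S : C →ₗ[ℂ] C) (a b : C) (n n' s : I) :
    mul' ℂ C (map (leftSlice φ ∘ₗ B.Δ n' n' ∘ₗ mulLeft ℂ a) S (B.Δ n s b))
      = ∑ᶠ t, mul' ℂ C (map ((leftSliceBy φ (mul ℂ C).flip).flip (B.Δ n' t a))
          (mul' ℂ C ∘ₗ lTensor C S ∘ₗ B.Δ n s) (B.Δ t n' b)) := by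
  set R : I → C →ₗ[ℂ] C := fun t => (leftSliceBy φ (mul ℂ C).flip).flip (B.Δ n' t a)
  have hfin : ∀ x, HasFiniteSupport fun t => (mul' ℂ C ∘ₗ rTensor C (R t) ∘ₗ B.Δ t n') x :=
    fun x => (B.hasFiniteSupport_Δ_left x n').subset fun t ht h0 => ht (by simp [h0])
  have hQ : leftSlice φ ∘ₗ B.Δ n' n' ∘ₗ mulLeft ℂ a = finsumLinearMap _ hfin := by
    ext x
    have hprod : HasFiniteSupport fun t => B.Δ n' t a * B.Δ t n' x :=
      (B.hasFiniteSupport_Δ_left x n').subset fun t ht h0 => ht (by simp [h0])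
    simp only [LinearMap.comp_apply, mulLeft_apply, finsumLinearMap_apply, B.Δ_mul,
      map_finsum (leftSlice φ) hprod, leftSlice_mul]
    rfl
  rw [hQ, map_finsumLinearMap_left, map_finsum (mul' ℂ C) (hasFiniteSupport_map_left hfin S _)]
  refine finsum_congr fun t => ?_
  have hassoc := mul'_map_mul'_assoc (R t) id S
    ((TensorProduct.assoc ℂ C C C).symm (lTensor C (B.Δ n s) (B.Δ t n' b)))
  rw [LinearEquiv.apply_symm_apply] at hassoc
  calc mul' ℂ C (map (mul' ℂ C ∘ₗ rTensor C (R t) ∘ₗ B.Δ t n') S (B.Δ n s b))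
      = mul' ℂ C (map (mul' ℂ C ∘ₗ rTensor C (R t)) S (rTensor C (B.Δ t n') (B.Δ n s b))) :=
        congrArg _ (LinearMap.congr_fun (map_comp_rTensor (f := mul' ℂ C ∘ₗ rTensor C (R t))
          (g := S) (f' := B.Δ t n')) _).symm
    _ = mul' ℂ C (map (mul' ℂ C ∘ₗ rTensor C (R t)) S
          ((TensorProduct.assoc ℂ C C C).symm (lTensor C (B.Δ n s) (B.Δ t n' b)))) := by
        rw [← B.coassoc, LinearEquiv.symm_apply_apply]
    _ = mul' ℂ C (map (R t) (mul' ℂ C ∘ₗ lTensor C S) (lTensor C (B.Δ n s) (B.Δ t n' b))) :=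
        hassoc.symm
    _ = mul' ℂ C (map (R t) (mul' ℂ C ∘ₗ lTensor C S ∘ₗ B.Δ n s) (B.Δ t n' b)) :=
        congrArg _ (LinearMap.congr_fun (map_comp_lTensor (f := R t)
          (g := mul' ℂ C ∘ₗ lTensor C S) (g' := B.Δ n s)) _)

theorem finsum_rightSlice_ε_Δ_mul_E (hb : b ∈ B.comp k' l' m' n') (R : I → C →ₗ[ℂ] C)
    (n : I) : ∑ᶠ t, R t (rightSlice B.ε (B.Δ t n' b)) * B.E t n = R m' b * B.E m' n := by
  rw [finsum_eq_single _ m' fun t ht => by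
      rw [rightSlice_apply, B.lTensor_Δ_eq_zero_of_mem hb fun y hy =>
        B.ε_supp _ _ _ _ (by simp [ht]) y hy, map_zero, map_zero, zero_mul],
    rightSlice_apply, B.counit_r k' l' m' n' b hb]

theorem leftSlice_Δ_mul_E (ha : a ∈ B.comp k l m n) (ψ : C →ₗ[ℂ] ℂ) (r s : I) :
    leftSlice ψ (B.Δ r s a) * B.E s n = leftSlice ψ (B.Δ r s a) :=
  eq_on_range_map_subtype (f := mulRight ℂ (B.E s n) ∘ₗ leftSlice ψ) (g := leftSlice ψ)
    (fun x _ y hy => by simp [hy.2]) (B.Δ_mem k l m n r s a ha)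

variable {B}

theorem IsRightIntegral.leftSlice_mulRight_Δ_eq_zero (hφ : B.IsRightIntegral φ)
    (hb : b ∈ B.comp k l m n) (a : C) {r s : I} (hr : r ≠ n) :
    leftSlice (φ ∘ₗ mulRight ℂ b) (B.Δ r s a) = 0 := by
  rw [leftSlice_apply, B.rTensor_Δ_eq_zero (fun K L x hx => ?_) a, map_zero]
  simpa using hφ.1 K l r n (fun h => hr h.2) _ (B.mul_mem_comp hx hb)

theorem IsRightIntegral.hasFiniteSupport_leftSlice_mulRight (hφ : B.IsRightIntegral φ)
    (b a : C) :
    HasFiniteSupport (uncurry fun r s => leftSliceBy φ (mul ℂ C).flip b (B.Δ r s a)) :=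
  B.hasFiniteSupport_slices_of_homogeneous _ (fun _ _ m _ _ hb a =>
    hasFiniteSupport_uncurry_of_eq_zero_of_ne_left _
      (fun _ _ hr => hφ.leftSlice_mulRight_Δ_eq_zero hb a hr)
      ((Set.finite_singleton m).subset fun _ hs =>
        by_contra fun h => hs (B.leftSlice_mulRight_Δ_eq_zero hb.1 a h))) b a

theorem IsRightIntegral.sliceSum_leftSlice_mulRight_of_mem (hφ : B.IsRightIntegral φ)
    (hb : b ∈ B.comp k' l' m' n') (a : C) :
    B.sliceSum (leftSliceBy φ (mul ℂ C).flip) b a = leftSlice (φ ∘ₗ mulRight ℂ b) (B.Δ n' m' a) :=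
  (finsum_eq_single _ n' fun _ hr => finsum_eq_zero_of_forall_eq_zero fun _ =>
      hφ.leftSlice_mulRight_Δ_eq_zero hb a hr).trans
    (finsum_eq_single _ m' fun _ hs => B.leftSlice_mulRight_Δ_eq_zero hb.1 a hs)

theorem IsRightIntegral.antipode_leftSlice_mulLeft (hφ : B.IsRightIntegral φ)
    (hS : B.IsAntipode S) (ha : a ∈ B.comp k l m n) (hb : b ∈ B.comp k' l' m' n') (s : I) :
    S (leftSlice (φ ∘ₗ mulLeft ℂ a) (B.Δ n s b))
      = mul' ℂ C (map (leftSlice φ ∘ₗ B.Δ n' n' ∘ₗ mulLeft ℂ a) S (B.Δ n s b)) := by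
  refine eq_on_range_map_subtype (f := S ∘ₗ leftSlice (φ ∘ₗ mulLeft ℂ a))
    (g := mul' ℂ C ∘ₗ map _ S) (fun x hx y hy => ?_) (B.Δ_mem k' l' m' n' n s b hb)
  simp only [LinearMap.comp_apply, leftSlice_tmul, map_tmul, mul'_apply, mulLeft_apply, map_smul,
    hφ.leftSlice_Δ (B.mul_mem_comp ha hx), smul_mul_assoc, (hS.1 _ _ _ _ y hy).1]

theorem IsAntipode.finsum_mul'_map_lTensor_Δ (hS : B.IsAntipode S) (hb : b ∈ B.comp k' l' m' n')
    (R : C →ₗ[ℂ] C) (n t : I) :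
    ∑ᶠ s, mul' ℂ C (map R (mul' ℂ C ∘ₗ lTensor C S ∘ₗ B.Δ n s) (B.Δ t n' b))
      = R (rightSlice B.ε (B.Δ t n' b)) * B.E t n := by
  have hL := B.hasFiniteSupport_mul'_lTensor_Δ S n
  rw [← map_finsum (mul' ℂ C) (hasFiniteSupport_map_right hL R _), ← map_finsumLinearMap_right hL]
  refine eq_on_range_map_subtype (f := mul' ℂ C ∘ₗ map R (finsumLinearMap _ hL))
    (g := mulRight ℂ (B.E t n) ∘ₗ R ∘ₗ rightSlice B.ε) (fun x _ y hy => ?_)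
    (B.Δ_mem k' l' m' n' t n' b hb)
  simp [finsumLinearMap_apply, hS.finsum_mul'_lTensor hy.1 n]

theorem IsRightIntegral.antipode_finsum_leftSlice_mulLeft (hφ : B.IsRightIntegral φ)
    (hS : B.IsAntipode S) (ha : a ∈ B.comp k l m n) (hb : b ∈ B.comp k' l' m' n') :
    S (∑ᶠ s, leftSlice (φ ∘ₗ mulLeft ℂ a) (B.Δ n s b))
      = leftSlice (φ ∘ₗ mulRight ℂ b) (B.Δ n' m' a) := by
  set R : I → C →ₗ[ℂ] C := fun t => (leftSliceBy φ (mul ℂ C).flip).flip (B.Δ n' t a)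
  set F : I → I → C := fun s t =>
    mul' ℂ C (map (R t) (mul' ℂ C ∘ₗ lTensor C S ∘ₗ B.Δ n s) (B.Δ t n' b))
  rw [map_finsum S ((B.hasFiniteSupport_Δ_right b n).fun_comp (map_zero _))]
  calc ∑ᶠ s, S (leftSlice (φ ∘ₗ mulLeft ℂ a) (B.Δ n s b))
      = ∑ᶠ s, ∑ᶠ t, F s t := finsum_congr fun s => by
        rw [hφ.antipode_leftSlice_mulLeft hS ha hb, B.mul'_map_leftSlice_Δ_mulLeft]
    _ = ∑ᶠ t, ∑ᶠ s, F s t :=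
        finsum_comm_of_finite (B.hasFiniteSupport_Δ_left b n')
          (fun s t ht => by simp only [F, notMem_support.mp ht, map_zero])
          (fun t => (hasFiniteSupport_map_right (B.hasFiniteSupport_mul'_lTensor_Δ S n)
            (R t) _).fun_comp (map_zero _))
    _ = ∑ᶠ t, R t (rightSlice B.ε (B.Δ t n' b)) * B.E t n :=
        finsum_congr fun t => hS.finsum_mul'_map_lTensor_Δ hb (R t) n t
    _ = R m' b * B.E m' n := B.finsum_rightSlice_ε_Δ_mul_E hb R n
    _ = leftSlice (φ ∘ₗ mulRight ℂ b) (B.Δ n' m' a) := B.leftSlice_Δ_mul_E ha _ n' m'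

theorem IsRightIntegral.antipode_sliceSum (hφ : B.IsRightIntegral φ) (hS : B.IsAntipode S)
    (a b : C) :
    S (B.sliceSum (leftSliceBy φ (mul ℂ C)) a b)
      = B.sliceSum (leftSliceBy φ (mul ℂ C).flip) b a := by
  have h₁ := B.hasFiniteSupport_leftSlice_mulLeft (φ := φ)
  have h₂ := hφ.hasFiniteSupport_leftSlice_mulRight
  induction a using B.induction_on_homogeneous with
  | zero => simp [sliceSum]
  | add a₁ a₂ ih₁ ih₂ => rw [sliceSum_add_left h₁, map_add, ih₁, ih₂, sliceSum_add_right h₂]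
  | homogeneous k l m n a ha =>
    induction b using B.induction_on_homogeneous with
    | zero => simp [sliceSum]
    | add b₁ b₂ ih₁ ih₂ => rw [sliceSum_add_right h₁, map_add, ih₁, ih₂, sliceSum_add_left h₂]
    | homogeneous k' l' m' n' b hb =>
      rw [B.sliceSum_leftSlice_mulLeft_of_mem ha, hφ.sliceSum_leftSlice_mulRight_of_mem hb,
        hφ.antipode_finsum_leftSlice_mulLeft hS ha hb]

end RightInvariant

end PartialBialgebra

/-- **strong invariance.** Let `𝒜` be a partial Hopf algebra with antipode `S`.
If `φ` is a left invariant integral, then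
`S((id ⊗ φ)(Δ(b)(1 ⊗ a))) = (id ⊗ φ)((1 ⊗ b)Δ(a))` for all `a, b`; if `φ` is a right
invariant integral, then `S((φ ⊗ id)((a ⊗ 1)Δ(b))) = (φ ⊗ id)(Δ(a)(b ⊗ 1))`.
Here `(id ⊗ φ)(Δ(b)(1 ⊗ a)) = Σ_{r,s} (id ⊗ (φ ∘ mulRight a))(Δ_{rs}(b))`, etc. -/
theorem strong_invariance
    {I C : Type} [NonUnitalRing C] [Module ℂ C] [SMulCommClass ℂ C C] [IsScalarTower ℂ C C]
    (B : PartialBialgebra I C) (S : C →ₗ[ℂ] C) (hS : B.IsAntipode S) (φ : C →ₗ[ℂ] ℂ) :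
    (B.IsLeftIntegral φ → ∀ a b : C,
      S (∑ᶠ (r : I), ∑ᶠ (s : I), (TensorProduct.rid ℂ C)
            ((LinearMap.lTensor C (φ ∘ₗ LinearMap.mulRight ℂ a)) (B.Δ r s b)))
        = ∑ᶠ (r : I), ∑ᶠ (s : I), (TensorProduct.rid ℂ C)
            ((LinearMap.lTensor C (φ ∘ₗ LinearMap.mulLeft ℂ b)) (B.Δ r s a))) ∧
    (B.IsRightIntegral φ → ∀ a b : C,
      S (∑ᶠ (r : I), ∑ᶠ (s : I), (TensorProduct.lid ℂ C)
            ((LinearMap.rTensor C (φ ∘ₗ LinearMap.mulLeft ℂ a)) (B.Δ r s b)))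
        = ∑ᶠ (r : I), ∑ᶠ (s : I), (TensorProduct.lid ℂ C)
            ((LinearMap.rTensor C (φ ∘ₗ LinearMap.mulRight ℂ b)) (B.Δ r s a))) :=
  ⟨fun hφ => hφ.antipode_sliceSum hS, fun hφ => hφ.antipode_sliceSum hS⟩
end
end

section
/- Let 𝒜 be an I-partial *-bialgebra which admits an antipode S, i.e. a partial Hopf *-algebra. Then the counit satisfies ε(a*) = conjugate(ε(a)) for all a ∈ A, and the antipode satisfies S(S(a)*)* = a for all a ∈ A; in particular the total antipode S: A → A is bijective. -/
open scoped TensorProduct Classical ComplexOrder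
open TensorProduct

noncomputable section

/-!
Applying `*` to the antipode identities and using `Δ_{rs}(a)* = Δ_{sr}(a*)` shows that
`T(a) = S(a*)*` satisfies `Σ T(a₍₂₎) a₍₁₎ = ε(a) 1`; the same trick applied to the counit
identities gives `ε(a*) = conj ε(a)`. The antipode is anti-comultiplicative,
`Δ(S a) = S(a₍₂₎) ⊗ S(a₍₁₎)`, because the sum `Σ (S(a₍₂₎) ⊗ S(a₍₁₎)) Δ(a₍₃₎ S(a₍₄₎))` collapses
to either side. Hence `T(S a) = Σ T(S a₍₁₎) S(a₍₂₎) a₍₃₎`, where the first two factors are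
`Σ T(b₍₂₎) b₍₁₎ = ε(b)` for `b = S(a₍₁₎)`, so `T(S a) = a`: the map `a ↦ S(a)*` is an involution,
and `S` is bijective.

In the partial setting a Sweedler sum is a sum over the indices `r, s` of the maps `Δ_{rs}`,
finite for each argument, and reading an iterated sum in two orders exchanges two such sums.
-/

open Function

namespace LinearMap

variable {R ι M N P Q : Type*} [CommSemiring R] [AddCommMonoid M] [AddCommMonoid N]
  [AddCommMonoid P] [AddCommMonoid Q] [Module R M] [Module R N] [Module R P] [Module R Q]

def PointwiseFinite (F : ι → M →ₗ[R] N) : Prop :=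
  ∀ x, HasFiniteSupport fun i => F i x

namespace PointwiseFinite

variable {F : ι → M →ₗ[R] N}

theorem comp (hF : PointwiseFinite F) (G : ι → N →ₗ[R] P) :
    PointwiseFinite fun i => G i ∘ₗ F i :=
  fun x => (hF x).subset fun i hi h => hi (by simp [h])

theorem apply_comp (hF : PointwiseFinite F) (G : ι → N →ₗ[R] P) (x : M) :
    HasFiniteSupport fun i => G i (F i x) :=
  hF.comp G x

theorem comp_right (hF : PointwiseFinite F) (G : P →ₗ[R] M) :
    PointwiseFinite fun i => F i ∘ₗ G :=
  fun x => hF (G x)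

theorem of_tmul {F : ι → M ⊗[R] N →ₗ[R] P}
    (hF : ∀ x y, HasFiniteSupport fun i => F i (x ⊗ₜ y)) : PointwiseFinite F := by
  intro z
  induction z using TensorProduct.induction_on with
  | zero => simp [HasFiniteSupport]
  | tmul x y => exact hF x y
  | add z w hz hw =>
    refine (hz.union hw).subset fun i hi => ?_
    simp only [map_add, mem_support] at hi
    by_contra h
    simp_all [not_or]

theorem lTensor (hF : PointwiseFinite F) : PointwiseFinite fun i => (F i).lTensor P :=
  of_tmul fun _ y => (hF y).subset fun i hi h => hi (by simp [h])

theorem rTensor (hF : PointwiseFinite F) : PointwiseFinite fun i => (F i).rTensor P :=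
  of_tmul fun x _ => (hF x).subset fun i hi h => hi (by simp [h])

end PointwiseFinite

def finsumOf (F : ι → M →ₗ[R] N) (hF : PointwiseFinite F) : M →ₗ[R] N where
  toFun x := ∑ᶠ i, F i x
  map_add' x y := by simp only [map_add]; exact finsum_add_distrib (hF x) (hF y)
  map_smul' c x := by simp only [map_smul]; exact (smul_finsum' c (hF x)).symm

@[simp] theorem finsumOf_apply (F : ι → M →ₗ[R] N) (hF : PointwiseFinite F) (x : M) :
    finsumOf F hF x = ∑ᶠ i, F i x := rfl

theorem finsum_map_left {F : ι → M →ₗ[R] N} (hF : PointwiseFinite F) (g : P →ₗ[R] Q)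
    (z : M ⊗[R] P) :
    ∑ᶠ i, TensorProduct.map (F i) g z = TensorProduct.map (finsumOf F hF) g z := by
  have hmap := (hF.rTensor (P := P)).comp fun _ => lTensor N g
  have key : finsumOf _ hmap = TensorProduct.map (finsumOf F hF) g :=
    TensorProduct.ext' fun x y => by
      simp only [finsumOf_apply, comp_apply, rTensor_tmul, lTensor_tmul, map_tmul]
      exact (map_finsum ((TensorProduct.mk R N Q).flip (g y)) (hF x)).symm
  simpa only [finsumOf_apply, lTensor_comp_rTensor] using LinearMap.congr_fun key z

theorem eqOn_range_map_subtype {p : Submodule R M} {q : Submodule R N}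
    {f g : M ⊗[R] N →ₗ[R] P} (h : ∀ x ∈ p, ∀ y ∈ q, f (x ⊗ₜ y) = g (x ⊗ₜ y)) {z : M ⊗[R] N}
    (hz : z ∈ range (TensorProduct.map p.subtype q.subtype)) : f z = g z := by
  obtain ⟨w, rfl⟩ := hz
  exact LinearMap.congr_fun (TensorProduct.ext' (fun x y => h x x.2 y y.2) :
    f ∘ₗ TensorProduct.map p.subtype q.subtype = g ∘ₗ TensorProduct.map p.subtype q.subtype) w

end LinearMap

theorem hasFiniteSupport_of_dominated {ι M N : Type*} [Zero M] [Zero N] {f : ι → M} (g : ι → N)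
    (hg : HasFiniteSupport g) (h : ∀ i, g i = 0 → f i = 0) : HasFiniteSupport f :=
  Set.Finite.subset hg fun i hi h0 => hi (h i h0)

theorem finsum_comm_of_dominated {ι κ M N : Type*} [AddCommMonoid M] [Zero N]
    {f : ι → κ → M} (g : ι → N) (hg : HasFiniteSupport g) (hfg : ∀ i, g i = 0 → ∀ j, f i j = 0)
    (hf : ∀ i, HasFiniteSupport (f i)) :
    ∑ᶠ i, ∑ᶠ j, f i j = ∑ᶠ j, ∑ᶠ i, f i j := by
  have hsub : ∀ h : ι → M, (∀ i, g i = 0 → h i = 0) → support h ⊆ hg.toFinset :=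
    fun h hh i hi => hg.mem_toFinset.2 (mt (hh i) hi)
  rw [finsum_eq_sum_of_support_subset _ (hsub _ fun i hi => by simp [hfg i hi]),
    sum_finsum_comm _ _ fun i _ => hf i]
  exact finsum_congr fun j =>
    (finsum_eq_sum_of_support_subset _ (hsub _ fun i hi => hfg i hi j)).symm

namespace PartialBialgebra

open LinearMap

variable {I C : Type} [NonUnitalRing C] [Module ℂ C]
  [SMulCommClass ℂ C C] [IsScalarTower ℂ C C] {B : PartialBialgebra I C}

section Grading

variable {a : C} {k l m n : I}

theorem E_mul_of_mem (ha : a ∈ B.comp k l m n) (p q : I) :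
    B.E p q * a = if p = k ∧ q = m then a else 0 := by
  split_ifs with h
  · obtain ⟨rfl, rfl⟩ := h
    exact ha.1
  · rw [← ha.1, ← mul_assoc, B.E_orth p k q m (by simpa [and_comm] using h), zero_mul]

theorem mul_E_of_mem (ha : a ∈ B.comp k l m n) (p q : I) :
    a * B.E p q = if p = l ∧ q = n then a else 0 := by
  split_ifs with h
  · obtain ⟨rfl, rfl⟩ := h
    exact ha.2
  · rw [← ha.2, mul_assoc, B.E_orth l p n q (by simpa [eq_comm] using h), mul_zero]

variable (B) in
theorem induction_on_comp {P : C → Prop} (zero : P 0) (add : ∀ x y, P x → P y → P (x + y))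
    (mem : ∀ k l m n, ∀ a ∈ B.comp k l m n, P a) (a : C) : P a := by
  have ha : a ∈ ⨆ x : I × I × I × I, gradeComp B.E x.1 x.2.1 x.2.2.1 x.2.2.2 := by
    rw [B.grading.submodule_iSup_eq_top]; trivial
  exact Submodule.iSup_induction _ (motive := P) ha (fun x => mem _ _ _ _) zero add

variable (B) in
/-- The subspace into which `Δ_{rs}` maps `A(k,l;m,n)`. -/
def legs (k l r s m n : I) : Submodule ℂ (C ⊗[ℂ] C) :=
  range (TensorProduct.map (B.comp k l r s).subtype (B.comp r s m n).subtype)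

theorem Δ_mem_legs (ha : a ∈ B.comp k l m n) (r s : I) : B.Δ r s a ∈ B.legs k l r s m n :=
  B.Δ_mem k l m n r s a ha

theorem eqOn_legs {M : Type*} [AddCommMonoid M] [Module ℂ M] {f g : C ⊗[ℂ] C →ₗ[ℂ] M}
    {r s : I} (h : ∀ x ∈ B.comp k l r s, ∀ y ∈ B.comp r s m n, f (x ⊗ₜ y) = g (x ⊗ₜ y))
    {z : C ⊗[ℂ] C} (hz : z ∈ B.legs k l r s m n) : f z = g z :=
  eqOn_range_map_subtype h hz

theorem E_tmul_E_mul_of_mem_legs {z : C ⊗[ℂ] C} {r s : I} (hz : z ∈ B.legs k l r s m n) :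
    (B.E k r ⊗ₜ[ℂ] B.E r m) * z = z :=
  eqOn_legs (f := mulLeft ℂ (B.E k r ⊗ₜ[ℂ] B.E r m)) (g := LinearMap.id) (fun x hx y hy => by
    simp [Algebra.TensorProduct.tmul_mul_tmul, E_mul_of_mem hx, E_mul_of_mem hy]) hz

theorem mul_E_tmul_E_of_mem_legs {z : C ⊗[ℂ] C} {r s : I} (hz : z ∈ B.legs k l r s m n) :
    z * (B.E l s ⊗ₜ[ℂ] B.E s n) = z :=
  eqOn_legs (f := mulRight ℂ (B.E l s ⊗ₜ[ℂ] B.E s n)) (g := LinearMap.id) (fun x hx y hy => by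
    simp [Algebra.TensorProduct.tmul_mul_tmul, mul_E_of_mem hx, mul_E_of_mem hy]) hz

variable (B) in
theorem pointwiseFinite_Δ_left (s : I) : PointwiseFinite fun r => B.Δ r s :=
  fun a => B.Δ_rcf_col a s

variable (B) in
theorem pointwiseFinite_Δ_right (r : I) : PointwiseFinite fun s => B.Δ r s :=
  fun a => B.Δ_rcf_row a r

end Grading

section Counit

variable (B) in
def counitLeft : C ⊗[ℂ] C →ₗ[ℂ] C := (TensorProduct.lid ℂ C).toLinearMap ∘ₗ rTensor C B.ε

variable (B) in
def counitRight : C ⊗[ℂ] C →ₗ[ℂ] C := (TensorProduct.rid ℂ C).toLinearMap ∘ₗ lTensor C B.ε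

@[simp] theorem counitLeft_tmul (x y : C) : B.counitLeft (x ⊗ₜ y) = B.ε x • y := rfl

@[simp] theorem counitRight_tmul (x y : C) : B.counitRight (x ⊗ₜ y) = B.ε y • x := rfl

variable {a : C} {k l m n : I}

theorem counitLeft_Δ_self (ha : a ∈ B.comp k l m n) : B.counitLeft (B.Δ k l a) = a :=
  B.counit_l k l m n a ha

theorem counitRight_Δ_self (ha : a ∈ B.comp k l m n) : B.counitRight (B.Δ m n a) = a :=
  B.counit_r k l m n a ha

theorem counitLeft_Δ_of_ne (ha : a ∈ B.comp k l m n) {r s : I} (h : (r, s) ≠ (k, l)) :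
    B.counitLeft (B.Δ r s a) = 0 :=
  eqOn_legs (g := 0) (fun x hx y _ => by
    simp [B.ε_supp k l r s (Ne.symm h) x hx]) (Δ_mem_legs ha r s)

theorem counitRight_Δ_of_ne (ha : a ∈ B.comp k l m n) {r s : I} (h : (r, s) ≠ (m, n)) :
    B.counitRight (B.Δ r s a) = 0 :=
  eqOn_legs (g := 0) (fun x _ y hy => by
    simp [B.ε_supp r s m n h y hy]) (Δ_mem_legs ha r s)

end Counit

section Star

variable [StarRing C] [StarModule ℂ C]

@[simp] theorem starTmul_tmul (x y : C) : starTmul (x ⊗ₜ[ℂ] y) = star x ⊗ₜ[ℂ] star y := rfl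

theorem star_mem_comp (hstar : B.IsStarBialgebra) {a : C} {k l m n : I}
    (ha : a ∈ B.comp k l m n) : star a ∈ B.comp l k n m :=
  ⟨by rw [← hstar.1 l n, ← star_mul, ha.2], by rw [← hstar.1 k m, ← star_mul, ha.1]⟩

variable (B) in
theorem conj_ε_star_counitLeft (z : C ⊗[ℂ] C) :
    starRingEnd ℂ (B.ε (star (B.counitLeft z))) = B.ε (star (B.counitRight (starTmul z))) := by
  induction z using TensorProduct.induction_on with
  | zero => simp
  | tmul x y =>
    simp only [counitLeft_tmul, counitRight_tmul, starTmul_tmul, star_smul, map_smul,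
      smul_eq_mul, starRingEnd_apply, star_mul', star_star]
    ring
  | add z w hz hw => simp only [map_add, star_add, hz, hw]

theorem ε_star (hstar : B.IsStarBialgebra) (a : C) :
    B.ε (star a) = starRingEnd ℂ (B.ε a) := by
  induction a using B.induction_on_comp with
  | zero => simp
  | add x y hx hy => rw [star_add, map_add, map_add, map_add, hx, hy]
  | mem k l m n a ha =>
    by_cases h : (k, l) = (m, n)
    · simp only [Prod.mk.injEq] at h
      obtain ⟨rfl, rfl⟩ := h
      -- `a = (ε ⊗ id) Δ_{kl} a` and `a* = (id ⊗ ε) Δ_{lk} a* = (id ⊗ ε) (Δ_{kl} a)*`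
      have key := B.conj_ε_star_counitLeft (B.Δ k l a)
      rw [counitLeft_Δ_self ha, ← hstar.2, counitRight_Δ_self (star_mem_comp hstar ha),
        star_star] at key
      rw [← key, starRingEnd_apply, starRingEnd_apply, star_star]
    · rw [B.ε_supp k l m n h a ha, B.ε_supp l k n m
        (fun he => h (by simp only [Prod.mk.injEq] at he ⊢; exact he.symm)) _
        (star_mem_comp hstar ha), map_zero]

end Star

section Antipode

variable {a : C} {k l m n : I}

theorem lamMul_of_mem (ha : a ∈ B.comp k l m n) (p : I) :
    B.lamMul p a = if p = k then a else 0 := by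
  rw [lamMul, finsum_eq_single _ m fun q hq => by simp [E_mul_of_mem ha, hq]]
  simp [E_mul_of_mem ha]

theorem mulRho_of_mem (ha : a ∈ B.comp k l m n) (p : I) :
    B.mulRho a p = if p = n then a else 0 := by
  rw [mulRho, finsum_eq_single _ l fun q hq => by simp [mul_E_of_mem ha, hq]]
  simp [mul_E_of_mem ha]

namespace IsAntipode

variable {S : C →ₗ[ℂ] C} (hS : B.IsAntipode S)
include hS

theorem mem_comp (ha : a ∈ B.comp k l m n) : S a ∈ B.comp n m l k :=
  hS.1 k l m n a ha

theorem finsum_mul_antipode (ha : a ∈ B.comp k l m n) (r : I) :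
    ∑ᶠ s, mul' ℂ C (lTensor C S (B.Δ r s a)) = B.ε a • B.E k r := by
  rw [hS.2.1, finsum_eq_single _ k fun p hp => by simp [lamMul_of_mem ha, hp]]
  simp [lamMul_of_mem ha]

theorem finsum_antipode_mul (ha : a ∈ B.comp k l m n) (s : I) :
    ∑ᶠ r, mul' ℂ C (rTensor C S (B.Δ r s a)) = B.ε a • B.E s n := by
  rw [hS.2.2, finsum_eq_single _ n fun p hp => by simp [mulRho_of_mem ha, hp]]
  simp [mulRho_of_mem ha]

theorem ε_apply (a : C) : B.ε (S a) = B.ε a := by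
  induction a using B.induction_on_comp with
  | zero => simp
  | add x y hx hy => rw [map_add, map_add, map_add, hx, hy]
  | mem k l m n a ha =>
    by_cases h : (k, l) = (m, n)
    · simp only [Prod.mk.injEq] at h
      obtain ⟨rfl, rfl⟩ := h
      have hlegs : ∀ s, B.ε (mul' ℂ C (lTensor C S (B.Δ k s a)))
          = B.ε (S (B.counitLeft (B.Δ k s a))) := fun s =>
        eqOn_legs (f := B.ε ∘ₗ mul' ℂ C ∘ₗ lTensor C S) (g := B.ε ∘ₗ S ∘ₗ B.counitLeft)
          (fun x hx y hy => by simp [B.ε_mul k l k k s k x hx _ (hS.mem_comp hy)])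
          (Δ_mem_legs ha k s)
      have hfin : HasFiniteSupport fun s => mul' ℂ C (lTensor C S (B.Δ k s a)) :=
        (B.pointwiseFinite_Δ_right k).apply_comp (fun _ => mul' ℂ C ∘ₗ lTensor C S) a
      have hsum := congrArg B.ε (hS.finsum_mul_antipode ha k)
      rw [map_finsum B.ε hfin, finsum_congr hlegs,
        finsum_eq_single _ l fun s hs => by
          rw [counitLeft_Δ_of_ne ha (by simp [hs]), map_zero, map_zero],
        counitLeft_Δ_self ha, map_smul, B.ε_E, smul_eq_mul, mul_one] at hsum
      exact hsum
    · rw [B.ε_supp k l m n h a ha, B.ε_supp n m l k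
        (fun he => h (by simp only [Prod.mk.injEq] at he ⊢; exact ⟨he.2.symm, he.1.symm⟩)) _
        (hS.mem_comp ha)]

end IsAntipode

end Antipode

section Anticomultiplicativity

variable (B) in
def antiΔ (S : C →ₗ[ℂ] C) (r s : I) : C →ₗ[ℂ] C ⊗[ℂ] C :=
  (TensorProduct.comm ℂ C C).toLinearMap ∘ₗ TensorProduct.map S S ∘ₗ B.Δ s r

variable (B) in
theorem pointwiseFinite_antiΔ (S : C →ₗ[ℂ] C) (r : I) :
    PointwiseFinite fun v => B.antiΔ S r v :=
  (B.pointwiseFinite_Δ_left r).comp fun _ => (TensorProduct.comm ℂ C C).toLinearMap ∘ₗ map S S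

variable (B) in
theorem mul_map_Δ_comp_mulRight (f : C →ₗ[ℂ] C ⊗[ℂ] C) (v s : I) (b : C) (X : C ⊗[ℂ] C) :
    mul' ℂ (C ⊗[ℂ] C) (map f (B.Δ v s ∘ₗ mulRight ℂ b) X)
      = ∑ᶠ t, mul' ℂ (C ⊗[ℂ] C) (map f (B.Δ v t) X) * B.Δ t s b := by
  have hPF : PointwiseFinite fun t =>
      mulRight ℂ (B.Δ t s b) ∘ₗ mul' ℂ (C ⊗[ℂ] C) ∘ₗ map f (B.Δ v t) :=
    PointwiseFinite.of_tmul fun p q => (B.Δ_rcf_row q v).subset fun t ht h => ht (by simp [h])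
  have key : mul' ℂ (C ⊗[ℂ] C) ∘ₗ map f (B.Δ v s ∘ₗ mulRight ℂ b) = finsumOf _ hPF :=
    TensorProduct.ext' fun p q => by
      have hfin : HasFiniteSupport fun t => B.Δ v t q * B.Δ t s b :=
        hasFiniteSupport_of_dominated _ (B.Δ_rcf_row q v) fun t h => by simp [h]
      simp [B.Δ_mul, mul_finsum' _ _ hfin, mul_assoc]
  exact LinearMap.congr_fun key X

variable (B) in
/-- By coassociativity, `(S b₁ ⊗ S x) Δ(b₂) = S(b₁) b₂ ⊗ S(x) b₃` in Sweedler notation. -/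
theorem mul_lTensor_Δ_rTensor_assoc_symm (S : C →ₗ[ℂ] C) (x b : C) (n v t w : I) :
    mul' ℂ (C ⊗[ℂ] C) (lTensor (C ⊗[ℂ] C) (B.Δ v t)
      (rTensor C ((TensorProduct.comm ℂ C C).toLinearMap ∘ₗ map S S)
        ((TensorProduct.assoc ℂ C C C).symm (x ⊗ₜ B.Δ w n b))))
      = map ((mul' ℂ C ∘ₗ rTensor C S) ∘ₗ B.Δ w n) (mulLeft ℂ (S x)) (B.Δ v t b) := by
  let f : C ⊗[ℂ] C →ₗ[ℂ] C ⊗[ℂ] C := (TensorProduct.comm ℂ C C).toLinearMap ∘ₗ map S S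
  let Ξ := mul' ℂ (C ⊗[ℂ] C) ∘ₗ rTensor (C ⊗[ℂ] C) (f ∘ₗ TensorProduct.mk ℂ C C x)
  have h₁ : mul' ℂ (C ⊗[ℂ] C) ∘ₗ lTensor (C ⊗[ℂ] C) (B.Δ v t) ∘ₗ rTensor C f ∘ₗ
      (TensorProduct.assoc ℂ C C C).symm.toLinearMap ∘ₗ TensorProduct.mk ℂ C (C ⊗[ℂ] C) x
      = Ξ ∘ₗ lTensor C (B.Δ v t) := by
    ext p q
    simp [Ξ, f]
  have h₂ : Ξ ∘ₗ (TensorProduct.assoc ℂ C C C).toLinearMap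
      = map (mul' ℂ C ∘ₗ rTensor C S) (mulLeft ℂ (S x)) := by
    ext p q c
    simp [Ξ, f, Algebra.TensorProduct.tmul_mul_tmul]
  have := LinearMap.congr_fun h₁ (B.Δ w n b)
  simp only [LinearMap.comp_apply, LinearEquiv.coe_coe, TensorProduct.mk_apply] at this
  rw [this, ← B.coassoc w n v t, ← LinearEquiv.coe_coe, ← LinearMap.comp_apply (f := Ξ), h₂]
  exact LinearMap.congr_fun (map_comp_rTensor (f' := B.Δ w n) ..) _

namespace IsAntipode

variable {S : C →ₗ[ℂ] C} (hS : B.IsAntipode S)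
include hS

theorem antiΔ_mem_legs {x : C} {k l w n : I} (hx : x ∈ B.comp k l w n) (r s : I) :
    B.antiΔ S r s x ∈ B.legs n w r s l k := by
  obtain ⟨Z, hZ⟩ := Δ_mem_legs hx s r
  rw [antiΔ, LinearMap.comp_apply, LinearMap.comp_apply, ← hZ]
  clear hZ
  induction Z using TensorProduct.induction_on with
  | zero => simp
  | tmul p q => exact ⟨⟨S q, hS.mem_comp q.2⟩ ⊗ₜ ⟨S p, hS.mem_comp p.2⟩, by simp⟩
  | add Z Z' h h' => simpa only [map_add] using add_mem h h'

theorem finsum_map_antipode_mul_Δ {W : C ⊗[ℂ] C} {α β v t γ δ : I} (hW : W ∈ B.legs α β v t γ δ)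
    (c : C) (n : I) :
    ∑ᶠ w, map ((mul' ℂ C ∘ₗ rTensor C S) ∘ₗ B.Δ w n) (mulLeft ℂ c) W
      = B.E n t ⊗ₜ (c * B.counitLeft W) := by
  have hF := (B.pointwiseFinite_Δ_left n).comp fun _ => mul' ℂ C ∘ₗ rTensor C S
  rw [finsum_map_left hF]
  exact eqOn_legs (g := TensorProduct.mk ℂ C C (B.E n t) ∘ₗ mulLeft ℂ c ∘ₗ B.counitLeft)
    (fun x hx y _ => by simp [hS.finsum_antipode_mul hx, TensorProduct.smul_tmul]) hW

theorem finsum_mul_map_antiΔ_Δ {x : C} {α β γ δ : I} (hx : x ∈ B.comp α β γ δ) (n r v t : I) :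
    ∑ᶠ w, mul' ℂ (C ⊗[ℂ] C) (map (B.antiΔ S r v) (B.Δ v t) (B.Δ w n x))
      = if t = r then B.E n r ⊗ₜ mul' ℂ C (rTensor C S (B.Δ v r x)) else 0 := by
  let f : C ⊗[ℂ] C →ₗ[ℂ] C ⊗[ℂ] C := (TensorProduct.comm ℂ C C).toLinearMap ∘ₗ map S S
  let L : I → C ⊗[ℂ] C →ₗ[ℂ] C ⊗[ℂ] C := fun w =>
    (mul' ℂ (C ⊗[ℂ] C) ∘ₗ lTensor (C ⊗[ℂ] C) (B.Δ v t) ∘ₗ rTensor C f ∘ₗ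
      (TensorProduct.assoc ℂ C C C).symm.toLinearMap) ∘ₗ lTensor C (B.Δ w n)
  have hL : PointwiseFinite L := (B.pointwiseFinite_Δ_left n).lTensor.comp _
  have hterm : ∀ w, mul' ℂ (C ⊗[ℂ] C) (map (B.antiΔ S r v) (B.Δ v t) (B.Δ w n x))
      = L w (B.Δ v r x) := fun w => by
    rw [show B.antiΔ S r v = f ∘ₗ B.Δ v r from rfl, ← lTensor_comp_rTensor, rTensor_comp]
    simp only [L, LinearMap.comp_apply, LinearEquiv.coe_coe]
    rw [← B.coassoc, LinearEquiv.symm_apply_apply]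
  have hsum : ∀ z ∈ B.legs α β v r γ δ, finsumOf L hL z
      = (if t = r then TensorProduct.mk ℂ C C (B.E n r) ∘ₗ mul' ℂ C ∘ₗ rTensor C S else 0) z :=
    fun z hz => eqOn_legs (fun x' _ b hb => by
      simp only [finsumOf_apply, L, f, LinearMap.comp_apply, lTensor_tmul, LinearEquiv.coe_coe,
        B.mul_lTensor_Δ_rTensor_assoc_symm, hS.finsum_map_antipode_mul_Δ (Δ_mem_legs hb v t)]
      split_ifs with htr
      · subst htr
        simp [counitLeft_Δ_self hb]
      · rw [counitLeft_Δ_of_ne hb (r := v) (s := t) (by simp [htr])]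
        simp) hz
  rw [finsum_congr hterm, ← finsumOf_apply L hL, hsum _ (Δ_mem_legs hx v r)]
  split_ifs <;> rfl

theorem finsum_finsum_mul_map_antiΔ_Δ_mul {x : C} {α β γ δ : I} (hx : x ∈ B.comp α β γ δ)
    (b : C) (n r s v : I) :
    ∑ᶠ w, ∑ᶠ t, mul' ℂ (C ⊗[ℂ] C) (map (B.antiΔ S r v) (B.Δ v t) (B.Δ w n x)) * B.Δ t s b
      = (B.E n r ⊗ₜ mul' ℂ C (rTensor C S (B.Δ v r x))) * B.Δ r s b := by
  have hsupp : ∀ X, HasFiniteSupport fun t =>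
      mul' ℂ (C ⊗[ℂ] C) (map (B.antiΔ S r v) (B.Δ v t) X) * B.Δ t s b := fun X =>
    hasFiniteSupport_of_dominated _
      ((B.pointwiseFinite_Δ_right v).lTensor.comp_right (rTensor C (B.antiΔ S r v)) X)
      fun t h => by rw [← lTensor_comp_rTensor, h]; simp
  rw [finsum_comm_of_dominated (fun w => B.Δ w n x) (B.Δ_rcf_col x n)
    (fun w h t => by simp [h]) fun w => hsupp _]
  rw [finsum_congr fun t => (finsum_mul' _ _ (hasFiniteSupport_of_dominated _
    (B.Δ_rcf_col x n) fun w h => by simp [h])).symm]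
  simp only [hS.finsum_mul_map_antiΔ_Δ hx]
  rw [finsum_eq_single _ r fun t ht => by simp [ht]]
  simp

theorem finsum_finsum_mul_map_antiΔ_assoc {z : C ⊗[ℂ] C} {k l u m n : I}
    (hz : z ∈ B.legs k l k u m n) (r s : I) :
    ∑ᶠ w, ∑ᶠ v, mul' ℂ (C ⊗[ℂ] C) (map (B.antiΔ S r v) (B.Δ v s ∘ₗ mul' ℂ C ∘ₗ lTensor C S)
      (TensorProduct.assoc ℂ C C C (rTensor C (B.Δ w n) z)))
      = B.Δ r s (S (B.counitLeft z)) := by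
  have hv : PointwiseFinite fun v => mul' ℂ (C ⊗[ℂ] C) ∘ₗ
      map (B.antiΔ S r v) (B.Δ v s ∘ₗ mul' ℂ C ∘ₗ lTensor C S) :=
    PointwiseFinite.of_tmul fun p _ =>
      hasFiniteSupport_of_dominated _ (B.pointwiseFinite_antiΔ S r p) fun v h => by simp [h]
  have hw : PointwiseFinite fun w => (finsumOf _ hv ∘ₗ
      (TensorProduct.assoc ℂ C C C).toLinearMap) ∘ₗ rTensor C (B.Δ w n) :=
    (B.pointwiseFinite_Δ_left n).rTensor.comp _
  refine eqOn_legs (f := finsumOf _ hw) (g := B.Δ r s ∘ₗ S ∘ₗ B.counitLeft)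
    (fun x hx y hy => ?_) hz
  have hexpand : ∀ v X, mul' ℂ (C ⊗[ℂ] C) (map (B.antiΔ S r v)
      (B.Δ v s ∘ₗ mul' ℂ C ∘ₗ lTensor C S) (TensorProduct.assoc ℂ C C C (X ⊗ₜ y)))
      = ∑ᶠ t, mul' ℂ (C ⊗[ℂ] C) (map (B.antiΔ S r v) (B.Δ v t) X) * B.Δ t s (S y) := by
    intro v X
    rw [← mul_map_Δ_comp_mulRight]
    induction X using TensorProduct.induction_on with
    | zero => simp
    | tmul p q => simp
    | add X X' h h' => simp only [TensorProduct.add_tmul, map_add, h, h']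
  simp only [finsumOf_apply, LinearMap.comp_apply, rTensor_tmul, LinearEquiv.coe_coe,
    counitLeft_tmul, map_smul, hexpand]
  rw [finsum_comm_of_dominated (fun w => B.Δ w n x) (B.Δ_rcf_col x n) (fun w h v => by simp [h])
    fun w => hasFiniteSupport_of_dominated (fun v => rTensor C (B.antiΔ S r v) (B.Δ w n x))
      ((B.pointwiseFinite_antiΔ S r).rTensor _) fun v h => by
        simp [← lTensor_comp_rTensor, h]]
  have hsum_v := map_finsum (mulRight ℂ (B.Δ r s (S y)) ∘ₗ TensorProduct.mk ℂ C C (B.E n r))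
    ((B.pointwiseFinite_Δ_left r).apply_comp (fun _ => mul' ℂ C ∘ₗ rTensor C S) x)
  simp only [LinearMap.comp_apply, mulRight_apply, TensorProduct.mk_apply] at hsum_v
  rw [finsum_congr fun v => hS.finsum_finsum_mul_map_antiΔ_Δ_mul hx _ n r s v, ← hsum_v,
    hS.finsum_antipode_mul hx, TensorProduct.tmul_smul, smul_mul_assoc,
    E_tmul_E_mul_of_mem_legs (Δ_mem_legs (hS.mem_comp hy) r s)]

theorem finsum_finsum_mul_map_antiΔ_lTensor {z : C ⊗[ℂ] C} {k l w n m : I}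
    (hz : z ∈ B.legs k l w n m n) (r s : I) :
    ∑ᶠ u, ∑ᶠ v, mul' ℂ (C ⊗[ℂ] C) (map (B.antiΔ S r v) (B.Δ v s ∘ₗ mul' ℂ C ∘ₗ lTensor C S)
      (lTensor C (B.Δ k u) z))
      = B.antiΔ S r s (B.counitRight z) := by
  have hv : PointwiseFinite fun v => mul' ℂ (C ⊗[ℂ] C) ∘ₗ
      map (B.antiΔ S r v) (B.Δ v s ∘ₗ mul' ℂ C ∘ₗ lTensor C S) :=
    PointwiseFinite.of_tmul fun p _ =>
      hasFiniteSupport_of_dominated _ (B.pointwiseFinite_antiΔ S r p) fun v h => by simp [h]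
  have hu : PointwiseFinite fun u => finsumOf _ hv ∘ₗ lTensor C (B.Δ k u) :=
    (B.pointwiseFinite_Δ_right k).lTensor.comp _
  refine eqOn_legs (f := finsumOf _ hu) (g := B.antiΔ S r s ∘ₗ B.counitRight)
    (fun x hx y hy => ?_) hz
  simp only [finsumOf_apply, LinearMap.comp_apply, lTensor_tmul, map_tmul, mul'_apply,
    counitRight_tmul, map_smul]
  rw [finsum_comm_of_dominated (fun u => B.Δ k u y) (B.Δ_rcf_row y k) (fun u h v => by simp [h])
    fun u => hasFiniteSupport_of_dominated _ (B.pointwiseFinite_antiΔ S r x) fun v h => by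
      simp [h]]
  have hrow := fun v => map_finsum
    (mul' ℂ (C ⊗[ℂ] C) ∘ₗ TensorProduct.mk ℂ _ _ (B.antiΔ S r v x) ∘ₗ B.Δ v s)
    ((B.pointwiseFinite_Δ_right k).apply_comp (fun _ => mul' ℂ C ∘ₗ lTensor C S) y)
  simp only [LinearMap.comp_apply, TensorProduct.mk_apply, mul'_apply] at hrow
  simp only [← hrow, hS.finsum_mul_antipode hy, map_smul, mul_smul_comm]
  rw [finsum_eq_single _ s fun v hv => by simp [B.Δ_E_ne w k v s hv], B.Δ_E_diag,
    mul_E_tmul_E_of_mem_legs (hS.antiΔ_mem_legs hx r s)]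

theorem Δ_antipode_apply (a : C) (r s : I) : B.Δ r s (S a) = B.antiΔ S r s a := by
  induction a using B.induction_on_comp with
  | zero => simp
  | add x y hx hy => rw [map_add, map_add, map_add, hx, hy]
  | mem k l m n a ha =>
    -- the two evaluations of `Σ S(a₂) ⊗ S(a₁) · Δ(a₃ S(a₄))` through coassociativity
    let Φ : I → C ⊗[ℂ] (C ⊗[ℂ] C) →ₗ[ℂ] C ⊗[ℂ] C := fun v =>
      mul' ℂ (C ⊗[ℂ] C) ∘ₗ map (B.antiΔ S r v) (B.Δ v s ∘ₗ mul' ℂ C ∘ₗ lTensor C S)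
    calc B.Δ r s (S a) = ∑ᶠ u, B.Δ r s (S (B.counitLeft (B.Δ k u a))) := by
          rw [finsum_eq_single _ l fun u hu => by
            rw [counitLeft_Δ_of_ne ha (by simp [hu]), map_zero, map_zero], counitLeft_Δ_self ha]
      _ = ∑ᶠ u, ∑ᶠ w, ∑ᶠ v, Φ v (TensorProduct.assoc ℂ C C C
            (rTensor C (B.Δ w n) (B.Δ k u a))) := finsum_congr fun u =>
          (hS.finsum_finsum_mul_map_antiΔ_assoc (Δ_mem_legs ha k u) r s).symm
      _ = ∑ᶠ w, ∑ᶠ u, ∑ᶠ v, Φ v (TensorProduct.assoc ℂ C C C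
            (rTensor C (B.Δ w n) (B.Δ k u a))) :=
          finsum_comm_of_dominated (fun u => B.Δ k u a) (B.Δ_rcf_row a k)
            (fun u h w => by simp [h]) fun u => hasFiniteSupport_of_dominated _
              ((B.pointwiseFinite_Δ_left n).rTensor (B.Δ k u a)) fun w h => by simp [h]
      _ = ∑ᶠ w, ∑ᶠ u, ∑ᶠ v, Φ v (lTensor C (B.Δ k u) (B.Δ w n a)) := by
          simp only [B.coassoc]
      _ = ∑ᶠ w, B.antiΔ S r s (B.counitRight (B.Δ w n a)) := finsum_congr fun w =>
          hS.finsum_finsum_mul_map_antiΔ_lTensor (Δ_mem_legs ha w n) r s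
      _ = B.antiΔ S r s a := by
          rw [finsum_eq_single _ m fun w hw => by
            rw [counitRight_Δ_of_ne ha (by simp [hw]), map_zero], counitRight_Δ_self ha]

end IsAntipode

end Anticomultiplicativity

section StarHopf

open WithConv

variable [StarRing C] [StarModule ℂ C] {S : C →ₗ[ℂ] C}

theorem star_mul'_lTensor_starTmul (z : C ⊗[ℂ] C) :
    star (mul' ℂ C (lTensor C S (starTmul z)))
      = mul' ℂ C (rTensor C (star (toConv S)).ofConv (TensorProduct.comm ℂ C C z)) := by
  induction z using TensorProduct.induction_on with
  | zero => simp
  | tmul x y => simp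
  | add z w hz hw => simp only [map_add, star_add, hz, hw]

namespace IsAntipode

variable (hS : B.IsAntipode S) (hstar : B.IsStarBialgebra)
include hS hstar

theorem intrinsicStar_mem_comp {a : C} {k l m n : I} (ha : a ∈ B.comp k l m n) :
    (star (toConv S)).ofConv a ∈ B.comp n m l k :=
  star_mem_comp hstar (hS.mem_comp (star_mem_comp hstar ha))

theorem finsum_intrinsicStar_mul {c : C} {k l m n : I} (hc : c ∈ B.comp k l m n) (r : I) :
    ∑ᶠ s, mul' ℂ C (rTensor C (star (toConv S)).ofConv (TensorProduct.comm ℂ C C (B.Δ s r c)))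
      = B.ε c • B.E l r := by
  have h := congrArg star (hS.finsum_mul_antipode (star_mem_comp hstar hc) r)
  simp only [hstar.2 _ r c] at h
  have hstar_sum := map_finsum (starAddEquiv : C ≃+ C) (hasFiniteSupport_of_dominated _
    (B.Δ_rcf_col c r) fun s hs => by simp [hs] :
      HasFiniteSupport fun s => mul' ℂ C (lTensor C S (starTmul (B.Δ s r c))))
  simp only [starAddEquiv_apply] at hstar_sum
  rw [hstar_sum] at h
  simpa [star_mul'_lTensor_starTmul, B.ε_star hstar, hstar.1] using h

theorem finsum_mul_map_intrinsicStar_lTensor {z : C ⊗[ℂ] C} {k l m w n : I}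
    (hz : z ∈ B.legs k l m w m n) :
    ∑ᶠ u, mul' ℂ C (map ((star (toConv S)).ofConv ∘ₗ S) (mul' ℂ C ∘ₗ rTensor C S)
      (lTensor C (B.Δ u l) z)) = (star (toConv S)).ofConv (S (B.counitRight z)) := by
  have hu : PointwiseFinite fun u => (mul' ℂ C ∘ₗ
      map ((star (toConv S)).ofConv ∘ₗ S) (mul' ℂ C ∘ₗ rTensor C S)) ∘ₗ lTensor C (B.Δ u l) :=
    (B.pointwiseFinite_Δ_left l).lTensor.comp _
  refine eqOn_legs (f := finsumOf _ hu) (g := (star (toConv S)).ofConv ∘ₗ S ∘ₗ B.counitRight)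
    (fun x hx y hy => ?_) hz
  simp only [finsumOf_apply, LinearMap.comp_apply, lTensor_tmul, map_tmul, mul'_apply,
    counitRight_tmul, map_smul]
  rw [← mul_finsum' _ _ (hasFiniteSupport_of_dominated _ (B.Δ_rcf_col y l) fun u h => by
      simp [h] : HasFiniteSupport fun u => mul' ℂ C (rTensor C S (B.Δ u l y))),
    hS.finsum_antipode_mul hy, mul_smul_comm,
    mul_E_of_mem (hS.intrinsicStar_mem_comp hstar (hS.mem_comp hx))]
  by_cases h : n = w
  · simp [h]
  · rw [B.ε_supp m w m n (by simp [Ne.symm h]) y hy]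
    simp

theorem finsum_mul_map_intrinsicStar_assoc {z : C ⊗[ℂ] C} {k l u m n : I}
    (hz : z ∈ B.legs k l u l m n) :
    ∑ᶠ w, mul' ℂ C (map ((star (toConv S)).ofConv ∘ₗ S) (mul' ℂ C ∘ₗ rTensor C S)
      (TensorProduct.assoc ℂ C C C (rTensor C (B.Δ m w) z))) = B.counitLeft z := by
  have hw : PointwiseFinite fun w => (mul' ℂ C ∘ₗ
      map ((star (toConv S)).ofConv ∘ₗ S) (mul' ℂ C ∘ₗ rTensor C S) ∘ₗ
      (TensorProduct.assoc ℂ C C C).toLinearMap) ∘ₗ rTensor C (B.Δ m w) :=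
    (B.pointwiseFinite_Δ_right m).rTensor.comp _
  refine eqOn_legs (f := finsumOf _ hw) (g := B.counitLeft) (fun x hx y hy => ?_) hz
  have hexpand : ∀ X, mul' ℂ C (map ((star (toConv S)).ofConv ∘ₗ S) (mul' ℂ C ∘ₗ rTensor C S)
      (TensorProduct.assoc ℂ C C C (X ⊗ₜ y)))
      = mul' ℂ C (rTensor C (star (toConv S)).ofConv (map S S X)) * y := by
    intro X
    induction X using TensorProduct.induction_on with
    | zero => simp
    | tmul p q => simp [mul_assoc]
    | add X X' h h' => simp only [TensorProduct.add_tmul, map_add, add_mul, h, h']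
  have hanti : ∀ w, map S S (B.Δ m w x) = TensorProduct.comm ℂ C C (B.Δ w m (S x)) := fun w => by
    simp [hS.Δ_antipode_apply, antiΔ]
  simp only [finsumOf_apply, LinearMap.comp_apply, rTensor_tmul, LinearEquiv.coe_coe, hexpand,
    hanti, counitLeft_tmul]
  rw [← finsum_mul' _ _ (hasFiniteSupport_of_dominated _ (B.Δ_rcf_col (S x) m)
      fun w h => by simp [h]), hS.finsum_intrinsicStar_mul hstar (hS.mem_comp hx),
    hS.ε_apply, smul_mul_assoc, E_mul_of_mem hy, if_pos ⟨rfl, rfl⟩]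

theorem intrinsicStar_antipode_apply (a : C) : (star (toConv S)).ofConv (S a) = a := by
  induction a using B.induction_on_comp with
  | zero => simp
  | add x y hx hy => rw [map_add, map_add, hx, hy]
  | mem k l m n a ha =>
    let Φ := mul' ℂ C ∘ₗ map ((star (toConv S)).ofConv ∘ₗ S) (mul' ℂ C ∘ₗ rTensor C S)
    calc (star (toConv S)).ofConv (S a)
        = ∑ᶠ w, (star (toConv S)).ofConv (S (B.counitRight (B.Δ m w a))) := by
          rw [finsum_eq_single _ n fun w hw => by
            rw [counitRight_Δ_of_ne ha (by simp [hw]), map_zero, map_zero], counitRight_Δ_self ha]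
      _ = ∑ᶠ w, ∑ᶠ u, Φ (lTensor C (B.Δ u l) (B.Δ m w a)) := finsum_congr fun w =>
          (hS.finsum_mul_map_intrinsicStar_lTensor hstar (Δ_mem_legs ha m w)).symm
      _ = ∑ᶠ u, ∑ᶠ w, Φ (lTensor C (B.Δ u l) (B.Δ m w a)) :=
          finsum_comm_of_dominated (fun w => B.Δ m w a) (B.Δ_rcf_row a m)
            (fun w h u => by simp [h]) fun w => hasFiniteSupport_of_dominated _
              ((B.pointwiseFinite_Δ_left l).lTensor (B.Δ m w a)) fun u h => by simp [h]
      _ = ∑ᶠ u, ∑ᶠ w, Φ (TensorProduct.assoc ℂ C C C (rTensor C (B.Δ m w) (B.Δ u l a))) := by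
          simp only [B.coassoc]
      _ = ∑ᶠ u, B.counitLeft (B.Δ u l a) := finsum_congr fun u =>
          hS.finsum_mul_map_intrinsicStar_assoc hstar (Δ_mem_legs ha u l)
      _ = a := by
          rw [finsum_eq_single _ k fun u hu => counitLeft_Δ_of_ne ha (by simp [hu]),
            counitLeft_Δ_self ha]

end IsAntipode

end StarHopf

end PartialBialgebra

/-- Let `𝒜` be a partial `*`-bialgebra admitting an antipode `S`
(a partial Hopf `*`-algebra). Then `ε(a*) = conj (ε a)` and `S(S(a)*)* = a` for all `a`;
in particular the total antipode is bijective. -/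
theorem star_hopf_algebra_properties
    {I C : Type} [NonUnitalRing C] [Module ℂ C] [SMulCommClass ℂ C C] [IsScalarTower ℂ C C]
    [StarRing C] [StarModule ℂ C]
    (B : PartialBialgebra I C) (hstar : B.IsStarBialgebra)
    (S : C →ₗ[ℂ] C) (hS : B.IsAntipode S) :
    (∀ a : C, B.ε (star a) = starRingEnd ℂ (B.ε a)) ∧
    (∀ a : C, star (S (star (S a))) = a) ∧
    Function.Bijective S := by
  have hinv : ∀ a, star (S (star (S a))) = a := hS.intrinsicStar_antipode_apply hstar
  refine ⟨B.ε_star hstar, hinv, ?_⟩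
  have hS_eq : ⇑S = star ∘ fun c => star (S c) := funext fun a => (star_star (S a)).symm
  rw [hS_eq]
  exact star_involutive.bijective.comp (Function.Involutive.bijective hinv)
end
end
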